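/- arXiv:2306.14004 — 9 statements merged into one kernel-verified Lean document; each statement's English description precedes it below -/
import Mathlib

section
/- Let T > k ≥ 1 be integers. Let V̂_ε be a T×T diagonal matrix with positive diagonal entries and V̂_y a T×T real symmetric matrix. Let 1+γ̂_1 ≥ 1+γ̂_2 ≥ ... ≥ 1+γ̂_T be the eigenvalues (counted with multiplicity) of the symmetric matrix A := V̂_ε^{-1/2} V̂_y V̂_ε^{-1/2}, assume γ̂_j > 0 for j = 1,...,k, and let Û be a T×k matrix whose columns û_1,...,û_k are orthonormal eigenvectors of A with A û_j = (1+γ̂_j) û_j. Set Γ̂ = diag(γ̂_1,...,γ̂_k), F̂ = V̂_ε^{1/2} Û Γ̂^{1/2}, and Ŝ = V̂_ε^{-1/2} M_{F̂,V̂_ε} (V̂_y − V̂_ε) M_{F̂,V̂_ε}' V̂_ε^{-1/2}. Then Ŝ is symmetric and its multiset of eigenvalues (with multiplicity) equals {γ̂_{k+1}, ..., γ̂_T} together with the value 0 counted k times. -/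
/-!
Write `V = R Rᵀ` with `R = V^{1/2}`, so that `F = R U Γ^{1/2}`. Then `Fᵀ V⁻¹ F = Γ` and the GLS
projection collapses to `M = R (1 - U Uᵀ) R⁻¹`, whence `S = P (A - 1) P` with the orthogonal
projection `P = 1 - U Uᵀ`. Since the columns of `U` are eigenvectors of the symmetric matrix
`A - 1`, this is the deflation `S = (A - 1) - U Γ Uᵀ`, which moves the eigenvalues `γ_1, …, γ_k`
to `0`: by the matrix determinant lemma, `det (x - S) ∏ⱼ (x - γⱼ) = xᵏ det (x - (A - 1))`.
-/

open Matrix Polynomial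

noncomputable section

namespace Matrix

variable {n k K : Type*} [Fintype n] [DecidableEq n] [Fintype k] [DecidableEq k] [Field K]

theorem isUnit_det_diagonal {v : n → K} (hv : ∀ i, v i ≠ 0) : IsUnit (diagonal v).det := by
  simpa [det_diagonal, Finset.prod_ne_zero_iff] using hv

theorem inv_diagonal_of_ne_zero {v : n → K} (hv : ∀ i, v i ≠ 0) :
    (diagonal v)⁻¹ = diagonal fun i => (v i)⁻¹ :=
  inv_eq_left_inv (by simp [diagonal_mul_diagonal, hv])

theorem sub_scalar_mul_eq_mul_diagonal {A : Matrix n n K} {U : Matrix n k K} {c : K}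
    {μ : k → K} (hU : ∀ j, A *ᵥ (fun i => U i j) = (c + μ j) • fun i => U i j) :
    (A - scalar n c) * U = U * diagonal μ := by
  ext i j
  have h := congrFun (hU j) i
  simp only [mulVec, dotProduct, Pi.smul_apply, smul_eq_mul] at h
  rw [Matrix.sub_mul, Matrix.sub_apply, mul_apply, h, scalar_apply, diagonal_mul, mul_diagonal]
  ring

theorem charpoly_sub_scalar_eq_prod {ι : Type*} [Fintype ι] {A : Matrix n n K} {c : K}
    {γ : ι → K} (h : A.charpoly = ∏ j, (X - C (c + γ j))) :
    (A - scalar n c).charpoly = ∏ j, (X - C (γ j)) := by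
  rw [charpoly_sub_scalar, h, prod_comp]
  refine Finset.prod_congr rfl fun j _ => ?_
  simp only [map_add, sub_comp, add_comp, X_comp, C_comp]
  ring

def glsOrthProjection (F : Matrix n k K) (V : Matrix n n K) : Matrix n n K :=
  1 - F * (Fᵀ * V⁻¹ * F)⁻¹ * Fᵀ * V⁻¹

theorem glsOrthProjection_mul_mul {R : Matrix n n K} {U : Matrix n k K} {G : Matrix k k K}
    (hR : IsUnit R.det) (hG : IsUnit G.det) (hU : Uᵀ * U = 1) :
    glsOrthProjection (R * U * G) (R * Rᵀ) = R * (1 - U * Uᵀ) * R⁻¹ := by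
  have hRt : IsUnit Rᵀ.det := by rwa [det_transpose]
  have hGt : IsUnit Gᵀ.det := by rwa [det_transpose]
  have hgram : (R * U * G)ᵀ * (R * Rᵀ)⁻¹ * (R * U * G) = Gᵀ * G := by
    simp only [transpose_mul, mul_inv_rev, Matrix.mul_assoc, nonsing_inv_mul_cancel_left _ _ hR,
      mul_nonsing_inv_cancel_left _ _ hRt, ← Matrix.mul_assoc Uᵀ U, hU, Matrix.one_mul]
  rw [glsOrthProjection, hgram, mul_inv_rev]
  simp only [transpose_mul, mul_inv_rev, Matrix.mul_assoc, Matrix.mul_sub, Matrix.sub_mul,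
    mul_nonsing_inv_cancel_left _ _ hG, nonsing_inv_mul_cancel_left _ _ hGt,
    mul_nonsing_inv_cancel_left _ _ hRt, Matrix.mul_one, mul_nonsing_inv _ hR]

theorem inv_mul_conj_mul_sub_mul_conj_transpose_mul_inv {R P Y : Matrix n n K}
    (hR : IsUnit R.det) (hRs : R.IsSymm) (hP : P.IsSymm) :
    R⁻¹ * (R * P * R⁻¹) * (Y - R * R) * (R * P * R⁻¹)ᵀ * R⁻¹ = P * (R⁻¹ * Y * R⁻¹ - 1) * P := by
  have hRinv : R⁻¹ᵀ = R⁻¹ := by rw [transpose_nonsing_inv, hRs.eq]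
  simp only [transpose_mul, hRinv, hRs.eq, hP.eq, Matrix.mul_assoc,
    nonsing_inv_mul_cancel_left _ _ hR, Matrix.mul_sub, Matrix.sub_mul,
    mul_nonsing_inv_cancel_left _ _ hR, mul_nonsing_inv _ hR, Matrix.mul_one]

theorem one_sub_mul_transpose_conj {B : Matrix n n K} {U : Matrix n k K} {μ : k → K}
    (hB : B.IsSymm) (hU : Uᵀ * U = 1) (hBU : B * U = U * diagonal μ) :
    (1 - U * Uᵀ) * B * (1 - U * Uᵀ) = B - U * diagonal μ * Uᵀ := by
  have hUB : Uᵀ * B = diagonal μ * Uᵀ := by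
    simpa [transpose_mul, hB.eq] using congrArg transpose hBU
  simp only [Matrix.sub_mul, Matrix.mul_sub, Matrix.one_mul, Matrix.mul_one, Matrix.mul_assoc,
    hUB]
  simp only [← Matrix.mul_assoc, hBU, hU]
  simp only [Matrix.mul_assoc, Matrix.one_mul]
  abel

theorem det_scalar_sub_sub_mul_diagonal_mul_transpose {B : Matrix n n K} {U : Matrix n k K}
    {μ : k → K} (hU : Uᵀ * U = 1) (hBU : B * U = U * diagonal μ) {x : K}
    (hx : IsUnit (scalar n x - B).det) (hxμ : ∀ j, x - μ j ≠ 0) :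
    (scalar n x - (B - U * diagonal μ * Uᵀ)).det * ∏ j, (x - μ j) =
      x ^ Fintype.card k * (scalar n x - B).det := by
  set W := scalar n x - B
  have hWU : W * U = U * diagonal (fun j => x - μ j) := by
    rw [Matrix.sub_mul, hBU, ← diagonal_sub, Matrix.mul_sub]
    ext i j
    simp [mul_comm]
  have hWinvU : W⁻¹ * U = U * diagonal (fun j => (x - μ j)⁻¹) := by
    have hright : W * (U * diagonal (fun j => (x - μ j)⁻¹)) = U := by
      rw [← Matrix.mul_assoc, hWU, Matrix.mul_assoc, diagonal_mul_diagonal]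
      simp [hxμ]
    rw [← hright, nonsing_inv_mul_cancel_left _ _ hx, hright]
  have hsmall :
      1 + Uᵀ * W⁻¹ * (U * diagonal μ) = diagonal (fun j => 1 + (x - μ j)⁻¹ * μ j) := by
    rw [Matrix.mul_assoc, ← Matrix.mul_assoc W⁻¹, hWinvU, ← Matrix.mul_assoc, ← Matrix.mul_assoc,
      hU, Matrix.one_mul, diagonal_mul_diagonal, ← diagonal_one, diagonal_add]
  rw [show scalar n x - (B - U * diagonal μ * Uᵀ) = W + U * diagonal μ * Uᵀ by
      simp only [W]; abel, det_add_mul _ _ hx, hsmall, det_diagonal, mul_assoc,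
    ← Finset.prod_mul_distrib, mul_comm, ← Finset.card_univ, ← Finset.prod_const]
  congr 1
  refine Finset.prod_congr rfl fun j _ => ?_
  field_simp [hxμ j]
  ring

theorem charpoly_sub_mul_diagonal_mul_transpose_mul_prod [Infinite K] {B : Matrix n n K}
    {U : Matrix n k K} {μ : k → K} (hU : Uᵀ * U = 1) (hBU : B * U = U * diagonal μ) :
    (B - U * diagonal μ * Uᵀ).charpoly * ∏ j, (X - C (μ j)) =
      X ^ Fintype.card k * B.charpoly := by
  set p := B.charpoly * ∏ j, (X - C (μ j))
  have hp : p ≠ 0 :=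
    (B.charpoly_monic.mul (monic_prod_of_monic _ _ fun j _ => monic_X_sub_C (μ j))).ne_zero
  refine eq_of_infinite_eval_eq _ _
    ((p.finite_setOfPred_isRoot hp).infinite_compl.mono fun x hx => ?_)
  simp only [Set.mem_compl_iff, Set.mem_ofPred_eq, IsRoot.def, p, eval_mul, eval_prod, eval_sub,
    eval_X, eval_C, mul_ne_zero_iff, Finset.prod_ne_zero_iff, Finset.mem_univ, true_implies,
    eval_charpoly] at hx
  simp only [Set.mem_ofPred_eq, eval_mul, eval_prod, eval_sub, eval_X, eval_C, eval_pow,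
    eval_charpoly]
  exact det_scalar_sub_sub_mul_diagonal_mul_transpose hU hBU (isUnit_iff_ne_zero.mpr hx.1) hx.2

end Matrix

theorem Fin.prod_univ_eq_prod_filter_le_mul_prod_castLE {M : Type*} [CommMonoid M] {k T : ℕ}
    (h : k ≤ T) (f : Fin T → M) :
    ∏ j, f j = (∏ j ∈ Finset.univ.filter (fun j : Fin T => k ≤ (j : ℕ)), f j) *
      ∏ j : Fin k, f (Fin.castLE h j) := by
  rw [← Finset.prod_filter_mul_prod_filter_not Finset.univ (fun j : Fin T => k ≤ (j : ℕ))]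
  have himage : Finset.univ.filter (fun j : Fin T => ¬ k ≤ (j : ℕ)) =
      Finset.univ.map (Fin.castLEEmb h) := by
    ext j
    simpa using ⟨fun hj => ⟨⟨j, hj⟩, rfl⟩, by rintro ⟨i, rfl⟩; exact i.isLt⟩
  rw [himage, Finset.prod_map]
  rfl

theorem statement0_general (T k : ℕ) (hkT : k < T)
    (d : Fin T → ℝ) (hd : ∀ t, 0 < d t)
    (Vy : Matrix (Fin T) (Fin T) ℝ) (hVy : Vyᵀ = Vy)
    (γ : Fin T → ℝ)
    (hγpos : ∀ j : Fin T, (j : ℕ) < k → 0 < γ j)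
    (A : Matrix (Fin T) (Fin T) ℝ)
    (hA : A = (Matrix.diagonal fun t => (Real.sqrt (d t))⁻¹) * Vy *
        (Matrix.diagonal fun t => (Real.sqrt (d t))⁻¹))
    (heig : A.charpoly = ∏ j : Fin T, (X - C (1 + γ j)))
    (U : Matrix (Fin T) (Fin k) ℝ)
    (hUorth : Uᵀ * U = 1)
    (hUeig : ∀ j : Fin k,
        A.mulVec (fun t => U t j) = (1 + γ (Fin.castLE hkT.le j)) • (fun t => U t j))
    (F : Matrix (Fin T) (Fin k) ℝ)
    (hF : F = (Matrix.diagonal fun t => Real.sqrt (d t)) * U *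
        Matrix.diagonal (fun j : Fin k => Real.sqrt (γ (Fin.castLE hkT.le j))))
    (M : Matrix (Fin T) (Fin T) ℝ)
    (hM : M = 1 - F * (Fᵀ * (Matrix.diagonal d)⁻¹ * F)⁻¹ * Fᵀ * (Matrix.diagonal d)⁻¹)
    (S : Matrix (Fin T) (Fin T) ℝ)
    (hS : S = (Matrix.diagonal fun t => (Real.sqrt (d t))⁻¹) * M *
        (Vy - Matrix.diagonal d) * Mᵀ * (Matrix.diagonal fun t => (Real.sqrt (d t))⁻¹)) :
    Sᵀ = S ∧
      S.charpoly =
        X ^ k *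
          ∏ j ∈ Finset.univ.filter (fun j : Fin T => k ≤ (j : ℕ)), (X - C (γ j)) := by
  set R : Matrix (Fin T) (Fin T) ℝ := diagonal fun t => √(d t)
  set μ : Fin k → ℝ := fun j => γ (Fin.castLE hkT.le j)
  have hsqrt : ∀ t, √(d t) ≠ 0 := fun t => (Real.sqrt_pos.mpr (hd t)).ne'
  have hR : IsUnit R.det := isUnit_det_diagonal hsqrt
  have hRs : R.IsSymm := isSymm_diagonal _
  have hRR : diagonal d = R * Rᵀ := by
    simp [R, diagonal_mul_diagonal, Real.mul_self_sqrt (hd _).le]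
  have hMR : M = R * (1 - U * Uᵀ) * R⁻¹ := by
    rw [hM, hF, hRR]
    exact glsOrthProjection_mul_mul hR
      (isUnit_det_diagonal fun j => (Real.sqrt_pos.mpr (hγpos _ j.isLt)).ne') hUorth
  have hAU : (A - 1) * U = U * diagonal μ := by
    simpa using sub_scalar_mul_eq_mul_diagonal hUeig
  have hAs : (A - 1).IsSymm := by
    refine IsSymm.sub ?_ isSymm_one
    rw [hA]
    simp [IsSymm, transpose_mul, hVy, Matrix.mul_assoc]
  have hSB : S = (A - 1) - U * diagonal μ * Uᵀ := by
    rw [← one_sub_mul_transpose_conj hAs hUorth hAU, hS, ← inv_diagonal_of_ne_zero hsqrt, hRR,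
      hRs.eq, hMR, hA, ← inv_diagonal_of_ne_zero hsqrt]
    exact inv_mul_conj_mul_sub_mul_conj_transpose_mul_inv hR hRs
      (isSymm_one.sub (by simp [IsSymm, transpose_mul]))
  refine ⟨by rw [hSB]; simp [transpose_mul, hAs.eq, Matrix.mul_assoc], ?_⟩
  have hdefl := charpoly_sub_mul_diagonal_mul_transpose_mul_prod hUorth hAU
  rw [← hSB, ← map_one (scalar (Fin T)), charpoly_sub_scalar_eq_prod heig, Fintype.card_fin,
    Fin.prod_univ_eq_prod_filter_le_mul_prod_castLE hkT.le, ← mul_assoc] at hdefl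
  exact mul_right_cancel₀ (monic_prod_of_monic _ _ fun j _ => monic_X_sub_C _).ne_zero hdefl

theorem statement0 (T k : ℕ) (hk : 1 ≤ k) (hkT : k < T)
    (d : Fin T → ℝ) (hd : ∀ t, 0 < d t)
    (Vy : Matrix (Fin T) (Fin T) ℝ) (hVy : Vyᵀ = Vy)
    (γ : Fin T → ℝ) (hγ : Antitone γ)
    (hγpos : ∀ j : Fin T, (j : ℕ) < k → 0 < γ j)
    (A : Matrix (Fin T) (Fin T) ℝ)
    (hA : A = (Matrix.diagonal fun t => (Real.sqrt (d t))⁻¹) * Vy *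
        (Matrix.diagonal fun t => (Real.sqrt (d t))⁻¹))
    (heig : A.charpoly = ∏ j : Fin T, (X - C (1 + γ j)))
    (U : Matrix (Fin T) (Fin k) ℝ)
    (hUorth : Uᵀ * U = 1)
    (hUeig : ∀ j : Fin k,
        A.mulVec (fun t => U t j) = (1 + γ (Fin.castLE hkT.le j)) • (fun t => U t j))
    (F : Matrix (Fin T) (Fin k) ℝ)
    (hF : F = (Matrix.diagonal fun t => Real.sqrt (d t)) * U *
        Matrix.diagonal (fun j : Fin k => Real.sqrt (γ (Fin.castLE hkT.le j))))
    (M : Matrix (Fin T) (Fin T) ℝ)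
    (hM : M = 1 - F * (Fᵀ * (Matrix.diagonal d)⁻¹ * F)⁻¹ * Fᵀ * (Matrix.diagonal d)⁻¹)
    (S : Matrix (Fin T) (Fin T) ℝ)
    (hS : S = (Matrix.diagonal fun t => (Real.sqrt (d t))⁻¹) * M *
        (Vy - Matrix.diagonal d) * Mᵀ * (Matrix.diagonal fun t => (Real.sqrt (d t))⁻¹)) :
    Sᵀ = S ∧
      S.charpoly =
        X ^ k *
          ∏ j ∈ Finset.univ.filter (fun j : Fin T => k ≤ (j : ℕ)), (X - C (γ j)) :=
  statement0_general T k hkT d hd Vy hVy γ hγpos A hA heig U hUorth hUeig F hF M hM S hS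
end
end

section
/- Let T > k ≥ 1 be integers. Let V̂_ε be a T×T diagonal matrix with positive diagonal entries and V̂_y a T×T real symmetric matrix. Let 1+γ̂_1 ≥ ... ≥ 1+γ̂_T be the eigenvalues (with multiplicity) of A := V̂_ε^{-1/2} V̂_y V̂_ε^{-1/2}, assume γ̂_j > 0 for j = 1,...,k, let Û be a T×k matrix of orthonormal eigenvectors of A for the k largest eigenvalues 1+γ̂_1,...,1+γ̂_k, set Γ̂ = diag(γ̂_1,...,γ̂_k), F̂ = V̂_ε^{1/2} Û Γ̂^{1/2}, and Ŝ = V̂_ε^{-1/2} M_{F̂,V̂_ε} (V̂_y − V̂_ε) M_{F̂,V̂_ε}' V̂_ε^{-1/2}. Then the squared Frobenius norm of Ŝ satisfies ‖Ŝ‖² = Σ_{j=k+1}^{T} γ̂_j². -/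
open Matrix Polynomial

noncomputable section

lemma charpoly_conj_aux {n : Type*} [Fintype n] [DecidableEq n] {R : Type*} [CommRing R]
    (Q Qi D : Matrix n n R) (h1 : Q * Qi = 1) :
    (Q * D * Qi).charpoly = D.charpoly := by
  have hf : ∀ M N : Matrix n n R, ((M * N).map (C : R → R[X])) = M.map C * N.map C := by
    intro M N
    exact Matrix.map_mul
  have hcomm : ∀ M : Matrix n n R[X], M * Matrix.scalar n (X : R[X]) = Matrix.scalar n X * M :=
    fun M => ((Matrix.scalar_commute (X : R[X]) (fun r' => Commute.all _ _) M)).symm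
  have key : charmatrix (Q * D * Qi) = Q.map C * charmatrix D * Qi.map C := by
    show Matrix.scalar n (X : R[X]) - (C : R →+* R[X]).mapMatrix (Q * D * Qi)
      = Q.map C * (Matrix.scalar n (X : R[X]) - (C : R →+* R[X]).mapMatrix D) * Qi.map C
    have h2 : Q.map (C : R → R[X]) * Qi.map C = 1 := by
      rw [← hf, h1, Matrix.map_one _ (map_zero C) (map_one C)]
    rw [RingHom.mapMatrix_apply, RingHom.mapMatrix_apply, Matrix.mul_sub, Matrix.sub_mul]
    congr 1
    · rw [hcomm (Q.map C), Matrix.mul_assoc, h2, Matrix.mul_one]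
    · rw [hf, hf]
  rw [Matrix.charpoly, Matrix.charpoly, key, det_mul, det_mul]
  have h2 : (Q.map (C : R → R[X])).det * (Qi.map C).det = 1 := by
    rw [← det_mul, ← hf, h1, Matrix.map_one _ (map_zero C) (map_one C), det_one]
  calc (Q.map (C : R → R[X])).det * (charmatrix D).det * (Qi.map C).det
      = (charmatrix D).det * ((Q.map C).det * (Qi.map C).det) := by ring
    _ = (charmatrix D).det := by rw [h2, mul_one]

lemma charpoly_diagonal_aux {n : Type*} [Fintype n] [DecidableEq n] {R : Type*} [CommRing R]
    (v : n → R) : (Matrix.diagonal v).charpoly = ∏ i, (X - C (v i)) := by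
  have : charmatrix (Matrix.diagonal v) = Matrix.diagonal (fun i => (X : R[X]) - C (v i)) := by
    ext i j
    by_cases h : i = j
    · subst h; rw [charmatrix_apply_eq, diagonal_apply_eq, diagonal_apply_eq]
    · rw [charmatrix_apply_ne _ _ _ h, diagonal_apply_ne _ h, diagonal_apply_ne _ h, map_zero,
        neg_zero]
  rw [Matrix.charpoly, this, det_diagonal]

theorem statement1 (T k : ℕ) (hk : 1 ≤ k) (hkT : k < T)
    (d : Fin T → ℝ) (hd : ∀ t, 0 < d t)
    (Vy : Matrix (Fin T) (Fin T) ℝ) (hVy : Vyᵀ = Vy)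
    (γ : Fin T → ℝ) (hγ : Antitone γ)
    (hγpos : ∀ j : Fin T, (j : ℕ) < k → 0 < γ j)
    (A : Matrix (Fin T) (Fin T) ℝ)
    (hA : A = (Matrix.diagonal fun t => (Real.sqrt (d t))⁻¹) * Vy *
        (Matrix.diagonal fun t => (Real.sqrt (d t))⁻¹))
    (heig : A.charpoly = ∏ j : Fin T, (X - C (1 + γ j)))
    (U : Matrix (Fin T) (Fin k) ℝ)
    (hUorth : Uᵀ * U = 1)
    (hUeig : ∀ j : Fin k,
        A.mulVec (fun t => U t j) = (1 + γ (Fin.castLE hkT.le j)) • (fun t => U t j))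
    (F : Matrix (Fin T) (Fin k) ℝ)
    (hF : F = (Matrix.diagonal fun t => Real.sqrt (d t)) * U *
        Matrix.diagonal (fun j : Fin k => Real.sqrt (γ (Fin.castLE hkT.le j))))
    (M : Matrix (Fin T) (Fin T) ℝ)
    (hM : M = 1 - F * (Fᵀ * (Matrix.diagonal d)⁻¹ * F)⁻¹ * Fᵀ * (Matrix.diagonal d)⁻¹)
    (S : Matrix (Fin T) (Fin T) ℝ)
    (hS : S = (Matrix.diagonal fun t => (Real.sqrt (d t))⁻¹) * M *
        (Vy - Matrix.diagonal d) * Mᵀ * (Matrix.diagonal fun t => (Real.sqrt (d t))⁻¹)) :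
    ∑ i : Fin T, ∑ t : Fin T, S i t ^ 2 =
      ∑ j ∈ Finset.univ.filter (fun j : Fin T => k ≤ (j : ℕ)), γ j ^ 2 := by
  -- abbreviations
  set Dh : Matrix (Fin T) (Fin T) ℝ := Matrix.diagonal (fun t => Real.sqrt (d t)) with hDh
  set Dih : Matrix (Fin T) (Fin T) ℝ := Matrix.diagonal (fun t => (Real.sqrt (d t))⁻¹) with hDih
  have hsq : ∀ t, Real.sqrt (d t) ≠ 0 := fun t => ne_of_gt (Real.sqrt_pos.mpr (hd t))
  have hDhDih : Dh * Dih = 1 := by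
    rw [hDh, hDih, diagonal_mul_diagonal, ← Matrix.diagonal_one]
    exact congrArg Matrix.diagonal (funext fun t => mul_inv_cancel₀ (hsq t))
  have hDihDh : Dih * Dh = 1 := by
    rw [hDh, hDih, diagonal_mul_diagonal, ← Matrix.diagonal_one]
    exact congrArg Matrix.diagonal (funext fun t => inv_mul_cancel₀ (hsq t))
  have hDhDh : Dh * Dh = Matrix.diagonal d := by
    rw [hDh, diagonal_mul_diagonal]
    exact congrArg Matrix.diagonal (funext fun t => Real.mul_self_sqrt (hd t).le)
  have hDinv : (Matrix.diagonal d)⁻¹ = Dih * Dih := by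
    apply Matrix.inv_eq_right_inv
    rw [← hDhDh]
    calc Dh * Dh * (Dih * Dih) = Dh * ((Dh * Dih) * Dih) := by simp only [Matrix.mul_assoc]
      _ = 1 := by rw [hDhDih, Matrix.one_mul, hDhDih]
  -- gamma diagonal
  have hgpos : ∀ j : Fin k, 0 < γ (Fin.castLE hkT.le j) := fun j => hγpos _ j.isLt
  set Γm : Matrix (Fin k) (Fin k) ℝ :=
    Matrix.diagonal (fun j : Fin k => γ (Fin.castLE hkT.le j)) with hΓm
  set Γh : Matrix (Fin k) (Fin k) ℝ :=
    Matrix.diagonal (fun j : Fin k => Real.sqrt (γ (Fin.castLE hkT.le j))) with hΓh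
  have hΓhΓh : Γh * Γh = Γm := by
    rw [hΓh, hΓm, diagonal_mul_diagonal]
    exact congrArg Matrix.diagonal (funext fun j => Real.mul_self_sqrt (hgpos j).le)
  have hΓinv : Γm⁻¹ = Matrix.diagonal (fun j : Fin k => (γ (Fin.castLE hkT.le j))⁻¹) := by
    apply Matrix.inv_eq_right_inv
    rw [hΓm, diagonal_mul_diagonal, ← Matrix.diagonal_one]
    exact congrArg Matrix.diagonal (funext fun j => mul_inv_cancel₀ (ne_of_gt (hgpos j)))
  have hGmid : Γh * Γm⁻¹ * Γh = 1 := by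
    rw [hΓh, hΓinv, diagonal_mul_diagonal, diagonal_mul_diagonal, ← Matrix.diagonal_one]
    refine congrArg Matrix.diagonal (funext fun j => ?_)
    rw [mul_right_comm, Real.mul_self_sqrt (hgpos j).le,
      mul_inv_cancel₀ (ne_of_gt (hgpos j))]
  have hFt : Fᵀ = Γh * Uᵀ * Dh := by
    rw [hF, Matrix.transpose_mul, Matrix.transpose_mul, Matrix.diagonal_transpose,
      Matrix.diagonal_transpose, Matrix.mul_assoc]
  have key1 : Fᵀ * (Matrix.diagonal d)⁻¹ * F = Γm := by
    rw [hFt, hF, hDinv]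
    calc Γh * Uᵀ * Dh * (Dih * Dih) * (Dh * U * Γh)
        = Γh * ((Uᵀ * ((Dh * Dih) * (Dih * Dh))) * (U * Γh)) := by
          simp only [Matrix.mul_assoc]
      _ = Γh * (Uᵀ * (U * Γh)) := by
          rw [hDhDih, hDihDh, Matrix.one_mul, Matrix.mul_one]
      _ = Γh * Γh := by rw [← Matrix.mul_assoc Uᵀ, hUorth, Matrix.one_mul]
      _ = Γm := hΓhΓh
  -- P projection
  set P : Matrix (Fin T) (Fin T) ℝ := 1 - U * Uᵀ with hP
  have hPt : Pᵀ = P := by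
    rw [hP, Matrix.transpose_sub, Matrix.transpose_one, Matrix.transpose_mul,
      Matrix.transpose_transpose]
  have hUUUU : (U * Uᵀ) * (U * Uᵀ) = U * Uᵀ := by
    rw [Matrix.mul_assoc, ← Matrix.mul_assoc Uᵀ, hUorth, Matrix.one_mul]
  have hPP : P * P = P := by
    rw [hP, Matrix.sub_mul, Matrix.mul_sub, Matrix.mul_sub, hUUUU]
    simp only [Matrix.one_mul, Matrix.mul_one]
    abel
  have hM' : M = 1 - Dh * (U * Uᵀ) * Dih := by
    rw [hM, key1, hFt, hF, hDinv]
    congr 1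
    calc Dh * U * Γh * Γm⁻¹ * (Γh * Uᵀ * Dh) * (Dih * Dih)
        = Dh * (U * ((Γh * Γm⁻¹ * Γh) * (Uᵀ * ((Dh * Dih) * Dih)))) := by
          simp only [Matrix.mul_assoc]
      _ = Dh * (U * (Uᵀ * Dih)) := by rw [hGmid, hDhDih, Matrix.one_mul, Matrix.one_mul]
      _ = Dh * (U * Uᵀ) * Dih := by simp only [Matrix.mul_assoc]
  have hDihM : Dih * M = P * Dih := by
    rw [hM', hP, Matrix.mul_sub, Matrix.sub_mul, Matrix.mul_one, Matrix.one_mul]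
    congr 1
    rw [← Matrix.mul_assoc, ← Matrix.mul_assoc, hDihDh, Matrix.one_mul]
  have hMtDih : Mᵀ * Dih = Dih * P := by
    have := congrArg Matrix.transpose hDihM
    rwa [Matrix.transpose_mul, Matrix.transpose_mul, hPt, hDih, Matrix.diagonal_transpose] at this
  -- B
  set B : Matrix (Fin T) (Fin T) ℝ := A - 1 with hB
  have hAsym : Aᵀ = A := by
    rw [hA, Matrix.transpose_mul, Matrix.transpose_mul, Matrix.diagonal_transpose, hVy,
      Matrix.mul_assoc]
  have h1mid : Dih * Matrix.diagonal d * Dih = 1 := by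
    rw [← hDhDh]
    calc Dih * (Dh * Dh) * Dih = (Dih * Dh) * (Dh * Dih) := by simp only [Matrix.mul_assoc]
      _ = 1 := by rw [hDihDh, hDhDih, Matrix.one_mul]
  have hmid : Dih * (Vy - Matrix.diagonal d) * Dih = Dih * Vy * Dih - 1 := by
    rw [Matrix.mul_sub, Matrix.sub_mul, h1mid]
  have hS' : S = P * B * P := by
    rw [hS, hB, hA]
    calc Dih * M * (Vy - Matrix.diagonal d) * Mᵀ * Dih
        = (Dih * M) * (Vy - Matrix.diagonal d) * (Mᵀ * Dih) := by
          simp only [Matrix.mul_assoc]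
      _ = P * (Dih * (Vy - Matrix.diagonal d) * Dih) * P := by
          rw [hDihM, hMtDih]; simp only [Matrix.mul_assoc]
      _ = P * (Dih * Vy * Dih - 1) * P := by rw [hmid]
  -- eigen equations
  have hAU : A * U = U * Matrix.diagonal (fun j : Fin k => 1 + γ (Fin.castLE hkT.le j)) := by
    ext t j
    have h0 := congrFun (hUeig j) t
    simp only [Matrix.mulVec, dotProduct, Pi.smul_apply, smul_eq_mul] at h0
    rw [Matrix.mul_apply, Matrix.mul_diagonal]
    rw [h0]; ring
  have hBU : B * U = U * Γm := by
    rw [hB, Matrix.sub_mul, Matrix.one_mul, hAU, hΓm]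
    have h0 : Matrix.diagonal (fun j : Fin k => 1 + γ (Fin.castLE hkT.le j))
        = 1 + Matrix.diagonal (fun j : Fin k => γ (Fin.castLE hkT.le j)) := by
      rw [← Matrix.diagonal_one, Matrix.diagonal_add]
    rw [h0, Matrix.mul_add, Matrix.mul_one]
    abel
  have hBsym : Bᵀ = B := by rw [hB, Matrix.transpose_sub, hAsym, Matrix.transpose_one]
  have hUtB : Uᵀ * B = Γm * Uᵀ := by
    have := congrArg Matrix.transpose hBU
    rwa [Matrix.transpose_mul, Matrix.transpose_mul, hBsym, hΓm, Matrix.diagonal_transpose] at this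
  have hPB : P * B = B * P := by
    have h1 : P * B = B - U * Γm * Uᵀ := by
      rw [hP, Matrix.sub_mul, Matrix.one_mul, Matrix.mul_assoc U Uᵀ B, hUtB,
        ← Matrix.mul_assoc U Γm Uᵀ]
    have h2 : B * P = B - U * Γm * Uᵀ := by
      rw [hP, Matrix.mul_sub, Matrix.mul_one, ← Matrix.mul_assoc B U Uᵀ, hBU]
    rw [h1, h2]
  have hS2 : S = B * P := by
    rw [hS', hPB, Matrix.mul_assoc, hPP]
  -- sum of squares as trace
  have hsum : ∑ i : Fin T, ∑ t : Fin T, S i t ^ 2 = Matrix.trace (S * Sᵀ) := by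
    simp only [Matrix.trace, Matrix.diag, Matrix.mul_apply, Matrix.transpose_apply, pow_two]
  have hSSt : S * Sᵀ = B * B * P := by
    rw [hS2, Matrix.transpose_mul, hPt, hBsym]
    calc B * P * (P * B) = B * (P * P) * B := by simp only [Matrix.mul_assoc]
      _ = B * (P * B) := by rw [hPP, Matrix.mul_assoc]
      _ = B * B * P := by rw [hPB, Matrix.mul_assoc]
  have htr2 : Matrix.trace (B * B * (U * Uᵀ)) = ∑ j : Fin k, γ (Fin.castLE hkT.le j) ^ 2 := by
    have hBBU : B * B * U = U * (Γm * Γm) := by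
      calc B * B * U = B * (B * U) := by rw [Matrix.mul_assoc]
        _ = B * (U * Γm) := by rw [hBU]
        _ = (B * U) * Γm := (Matrix.mul_assoc B U Γm).symm
        _ = U * Γm * Γm := by rw [hBU]
        _ = U * (Γm * Γm) := by rw [Matrix.mul_assoc]
    calc Matrix.trace (B * B * (U * Uᵀ))
        = Matrix.trace ((B * B * U) * Uᵀ) := by simp only [Matrix.mul_assoc]
      _ = Matrix.trace (Uᵀ * (B * B * U)) := by rw [Matrix.trace_mul_comm]
      _ = Matrix.trace (Γm * Γm) := by
          rw [hBBU, ← Matrix.mul_assoc, hUorth, Matrix.one_mul]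
      _ = ∑ j : Fin k, γ (Fin.castLE hkT.le j) ^ 2 := by
          rw [hΓm, diagonal_mul_diagonal, Matrix.trace_diagonal]
          exact Finset.sum_congr rfl fun j _ => (sq (γ (Fin.castLE hkT.le j))).symm
  -- spectral part
  have hherm : A.IsHermitian := by
    rw [Matrix.IsHermitian]
    ext i j
    simp only [Matrix.conjTranspose_apply, RCLike.star_def, starRingEnd_apply, star_trivial]
    exact congrFun (congrFun hAsym i) j
  set μ : Fin T → ℝ := hherm.eigenvalues with hμ
  set Q : Matrix (Fin T) (Fin T) ℝ := (hherm.eigenvectorUnitary : Matrix (Fin T) (Fin T) ℝ)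
    with hQ
  have hQQs : Q * star Q = 1 := Matrix.mem_unitaryGroup_iff.mp hherm.eigenvectorUnitary.2
  have hQsQ : star Q * Q = 1 := Matrix.mem_unitaryGroup_iff'.mp hherm.eigenvectorUnitary.2
  have hAQ : A = Q * Matrix.diagonal μ * star Q := by
    have := hherm.spectral_theorem
    rwa [RCLike.ofReal_real_eq_id, Function.id_comp] at this
  have hBQ : B = Q * Matrix.diagonal (fun i => μ i - 1) * star Q := by
    rw [hB, hAQ]
    have h1 : (1 : Matrix (Fin T) (Fin T) ℝ) = Q * Matrix.diagonal (fun _ => (1:ℝ)) * star Q := by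
      rw [Matrix.diagonal_one, Matrix.mul_one, hQQs]
    calc Q * Matrix.diagonal μ * star Q - 1
        = Q * Matrix.diagonal μ * star Q - Q * Matrix.diagonal (fun _ => (1:ℝ)) * star Q := by
          rw [← h1]
      _ = Q * (Matrix.diagonal μ - Matrix.diagonal (fun _ => (1:ℝ))) * star Q := by
          rw [Matrix.mul_sub, Matrix.sub_mul]
      _ = Q * Matrix.diagonal (fun i => μ i - 1) * star Q := by rw [Matrix.diagonal_sub]
  have hBB : B * B = Q * Matrix.diagonal (fun i => (μ i - 1) * (μ i - 1)) * star Q := by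
    rw [hBQ]
    calc Q * Matrix.diagonal (fun i => μ i - 1) * star Q *
          (Q * Matrix.diagonal (fun i => μ i - 1) * star Q)
        = Q * (Matrix.diagonal (fun i => μ i - 1) * ((star Q * Q) *
            (Matrix.diagonal (fun i => μ i - 1) * star Q))) := by simp only [Matrix.mul_assoc]
      _ = Q * (Matrix.diagonal (fun i => μ i - 1) *
            (Matrix.diagonal (fun i => μ i - 1) * star Q)) := by rw [hQsQ, Matrix.one_mul]
      _ = Q * (Matrix.diagonal (fun i => μ i - 1) * Matrix.diagonal (fun i => μ i - 1)) *
            star Q := by simp only [Matrix.mul_assoc]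
      _ = Q * Matrix.diagonal (fun i => (μ i - 1) * (μ i - 1)) * star Q := by
          rw [diagonal_mul_diagonal]
  have htrBBμ : Matrix.trace (B * B) = ∑ i : Fin T, (μ i - 1) ^ 2 := by
    rw [hBB, Matrix.trace_mul_comm, ← Matrix.mul_assoc, hQsQ, Matrix.one_mul,
      Matrix.trace_diagonal]
    exact Finset.sum_congr rfl fun i _ => (sq (μ i - 1)).symm
  -- multiset of eigenvalues
  have hcp : A.charpoly = ∏ i : Fin T, (X - C (μ i)) := by
    rw [hAQ, charpoly_conj_aux _ _ _ hQQs, charpoly_diagonal_aux]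
  have hprod : ∏ j : Fin T, (X - C (1 + γ j)) = ∏ i : Fin T, (X - C (μ i)) := by
    rw [← heig, hcp]
  have hms : Multiset.map (fun j => 1 + γ j) Finset.univ.val
      = Multiset.map μ Finset.univ.val := by
    have h1 := roots_multiset_prod_X_sub_C
      (Multiset.map (fun j : Fin T => 1 + γ j) Finset.univ.val)
    have h2 := roots_multiset_prod_X_sub_C (Multiset.map μ Finset.univ.val)
    rw [Multiset.map_map] at h1 h2
    have e1 : (Multiset.map ((fun a => X - C a) ∘ fun j : Fin T => 1 + γ j)
        Finset.univ.val).prod = ∏ j : Fin T, (X - C (1 + γ j)) :=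
      (Finset.prod_eq_multiset_prod _ _).symm
    have e2 : (Multiset.map ((fun a => X - C a) ∘ μ) Finset.univ.val).prod
        = ∏ i : Fin T, (X - C (μ i)) := (Finset.prod_eq_multiset_prod _ _).symm
    rw [e1, hprod, ← e2, h2] at h1
    exact h1.symm
  have hsumγμ : ∑ j : Fin T, γ j ^ 2 = ∑ i : Fin T, (μ i - 1) ^ 2 := by
    have h0 := congrArg (fun s : Multiset ℝ => (Multiset.map (fun x => (x - 1) ^ 2) s).sum) hms
    simp only [Multiset.map_map] at h0
    have e1 : (Multiset.map ((fun x => (x - 1) ^ 2) ∘ fun j : Fin T => 1 + γ j)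
        Finset.univ.val).sum = ∑ j : Fin T, γ j ^ 2 := by
      rw [show ((fun x => (x - 1) ^ 2) ∘ fun j : Fin T => 1 + γ j) = fun j => γ j ^ 2 from
        funext fun j => by simp only [Function.comp_apply]; ring]
      exact (Finset.sum_eq_multiset_sum _ _).symm
    have e2 : (Multiset.map ((fun x => (x - 1) ^ 2) ∘ μ) Finset.univ.val).sum
        = ∑ i : Fin T, (μ i - 1) ^ 2 := (Finset.sum_eq_multiset_sum _ _).symm
    rw [e1, e2] at h0
    exact h0
  have htrBB : Matrix.trace (B * B) = ∑ j : Fin T, γ j ^ 2 := by rw [htrBBμ, hsumγμ]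
  -- assemble
  rw [hsum, hSSt, hP, Matrix.mul_sub, Matrix.mul_one, Matrix.trace_sub, htrBB, htr2]
  have hkk : ∑ j : Fin k, γ (Fin.castLE hkT.le j) ^ 2
      = ∑ j ∈ Finset.univ.filter (fun j : Fin T => ¬ k ≤ (j : ℕ)), γ j ^ 2 := by
    refine Finset.sum_bij' (fun (j : Fin k) _ => Fin.castLE hkT.le j)
      (fun (j : Fin T) hj => ⟨(j : ℕ), by
        simp only [Finset.mem_filter, Finset.mem_univ, true_and, not_le] at hj; exact hj⟩)
      ?_ ?_ ?_ ?_ ?_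
    · intro a _
      simp only [Finset.mem_filter, Finset.mem_univ, true_and, not_le]
      exact a.isLt
    · intro a _; exact Finset.mem_univ _
    · intro a _; rfl
    · intro a _; rfl
    · intro a _; rfl
  have hsplit := Finset.sum_filter_add_sum_filter_not Finset.univ
    (fun j : Fin T => k ≤ (j : ℕ)) (fun j => γ j ^ 2)
  rw [hkk]
  linarith [hsplit]
end
end

section
/- Let T > k ≥ 1 be integers, let V be a T×T diagonal matrix with positive diagonal entries, let F be a T×k real matrix of full column rank, and let G be a T×(T−k) real matrix with F' V^{-1} G = 0 and G' V^{-1} G = I_{T−k}. Let X be the ((T−k)(T−k+1)/2)×T matrix whose t-th column is vech(G' E_{t,t} G). Then M_{F,V} = G G' V^{-1}, and the Hadamard square of the GLS projection matrix satisfies M_{F,V}^{⊙2} = 2 (X' X) V^{-2}. -/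
/-! With `W = V⁻¹`, the matrix `F'WF` is positive definite because `F` has full column rank, and
`[(F'WF)⁻¹F'W; G'W]` is a left inverse of the square block matrix `[F G]`. It is then also a right
inverse, which is the decomposition `I = F(F'WF)⁻¹F'W + GG'W`.
So `M_{st} = (GG')_{st} W_t`, while `G'E_{t,t}G = g_t g_t'` for the `t`-th row `g_t` of `G`.
The `1/√2` on the diagonal makes `2 ⟨vech A, vech B⟩ = ∑ᵢⱼ Aᵢⱼ Bᵢⱼ` for symmetric `A`, `B`, and
`∑ᵢⱼ (g_s g_s')ᵢⱼ (g_t g_t')ᵢⱼ = (g_s' g_t)²`, which gives the Hadamard square. -/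

open Matrix

noncomputable section

/-- Half-vectorization of a symmetric matrix, with diagonal entries scaled by `1/√2`,
indexed by pairs `(i, j)` with `i ≤ j`. -/
def vech {m : ℕ} (Z : Matrix (Fin m) (Fin m) ℝ) :
    {q : Fin m × Fin m // q.1 ≤ q.2} → ℝ :=
  fun q => if q.val.1 = q.val.2 then Z q.val.1 q.val.2 / Real.sqrt 2 else Z q.val.1 q.val.2

section Projection

variable {m n p R : Type*} [Fintype n]

theorem Matrix.mulVec_injective_of_rank_eq_card [Field R] {F : Matrix m n R}
    (hF : F.rank = Fintype.card n) : Function.Injective F.mulVec := by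
  rw [mulVec_injective_iff, linearIndependent_iff_card_eq_finrank_span, ← hF,
    rank_eq_finrank_span_cols]
  rfl

theorem Matrix.posDef_transpose_mul_diagonal_mul [Fintype m] [DecidableEq m] {d : m → ℝ}
    (hd : ∀ i, 0 < d i) {F : Matrix m n ℝ} (hF : F.rank = Fintype.card n) :
    (Fᵀ * diagonal d * F).PosDef := by
  simpa using (PosDef.diagonal hd).conjTranspose_mul_mul_same
    (mulVec_injective_of_rank_eq_card hF)

theorem Matrix.one_sub_mul_inv_mul_eq_mul_transpose_mul [Fintype m] [Fintype p]
    [DecidableEq m] [DecidableEq n] [DecidableEq p] [CommRing R] (e : m ≃ n ⊕ p)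
    {W : Matrix m m R} (hW : Wᵀ = W) {F : Matrix m n R} {G : Matrix m p R}
    (hFG : Fᵀ * W * G = 0) (hGG : Gᵀ * W * G = 1) (hB : IsUnit (Fᵀ * W * F)) :
    1 - F * (Fᵀ * W * F)⁻¹ * Fᵀ * W = G * Gᵀ * W := by
  have hGF : Gᵀ * W * F = 0 := by
    simpa [transpose_mul, hW, Matrix.mul_assoc] using congrArg transpose hFG
  have hleft : fromRows ((Fᵀ * W * F)⁻¹ * Fᵀ * W) (Gᵀ * W) * fromCols F G = 1 := by
    have h11 : (Fᵀ * W * F)⁻¹ * Fᵀ * W * F = 1 := by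
      rw [Matrix.mul_assoc, Matrix.mul_assoc, ← Matrix.mul_assoc Fᵀ,
        nonsing_inv_mul _ ((isUnit_iff_isUnit_det _).mp hB)]
    have h12 : (Fᵀ * W * F)⁻¹ * Fᵀ * W * G = 0 := by
      rw [Matrix.mul_assoc, Matrix.mul_assoc, ← Matrix.mul_assoc Fᵀ, hFG, Matrix.mul_zero]
    rw [fromRows_mul, mul_fromCols, mul_fromCols, fromRows_fromCols_eq_fromBlocks, h11, h12, hGF,
      hGG, fromBlocks_one]
  have hright := (fromCols_mul_fromRows_eq_one_comm e F G _ _).mpr hleft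
  rw [fromCols_mul_fromRows] at hright
  rw [sub_eq_iff_eq_add', ← hright]
  simp only [Matrix.mul_assoc]

end Projection

theorem Fintype.sum_sum_eq_sum_le_of_symm {ι R : Type*} [Fintype ι] [LinearOrder ι] [Semiring R]
    {P : ι → ι → R} (hP : ∀ i j, P i j = P j i) :
    ∑ i, ∑ j, P i j =
      ∑ q : {q : ι × ι // q.1 ≤ q.2},
        if q.1.1 = q.1.2 then P q.1.1 q.1.2 else 2 * P q.1.1 q.1.2 := by
  have hswap :
      ∑ q : ι × ι with ¬ q.1 ≤ q.2, P q.1 q.2 = ∑ q : ι × ι with q.1 < q.2, P q.1 q.2 :=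
    Finset.sum_nbij' Prod.swap Prod.swap (by simp) (by simp) (by simp) (by simp)
      (fun q _ => hP _ _)
  have hlt : ∑ q : ι × ι with q.1 < q.2, P q.1 q.2 =
      ∑ q : ι × ι with q.1 ≤ q.2, if q.1 = q.2 then 0 else P q.1 q.2 := by
    simp_rw [lt_iff_le_and_ne, ← Finset.filter_filter,
      Finset.sum_filter (fun q : ι × ι => q.1 ≠ q.2), ite_not]
  rw [← Fintype.sum_prod_type', ← Finset.sum_filter_add_sum_filter_not _ (fun q => q.1 ≤ q.2),
    hswap, hlt, ← Finset.sum_add_distrib,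
    Finset.sum_subtype _ (fun q => by simp) (p := fun q : ι × ι => q.1 ≤ q.2)]
  refine Fintype.sum_congr _ _ fun q => ?_
  split_ifs <;> simp [two_mul]

theorem Matrix.transpose_mul_single_mul_apply {ι n R : Type*} [Fintype ι] [DecidableEq ι]
    [CommSemiring R] (G : Matrix ι n R) (t : ι) (i j : n) :
    (Gᵀ * single t t (1 : R) * G) i j = G t i * G t j := by
  rw [Matrix.mul_assoc, mul_apply, Fintype.sum_eq_single t fun x hx => by
    rw [single_mul_apply_of_ne _ _ _ _ _ hx, mul_zero], single_mul_apply_same, one_mul,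
    transpose_apply]

theorem two_mul_vech_dotProduct_vech {m : ℕ} {A B : Matrix (Fin m) (Fin m) ℝ} (hA : A.IsSymm)
    (hB : B.IsSymm) : 2 * (vech A ⬝ᵥ vech B) = ∑ i, ∑ j, A i j * B i j := by
  rw [Fintype.sum_sum_eq_sum_le_of_symm fun i j => by rw [hA.apply, hB.apply], dotProduct,
    Finset.mul_sum]
  refine Fintype.sum_congr _ _ fun q => ?_
  unfold vech
  split_ifs
  · field_simp
    rw [Real.sq_sqrt zero_le_two]
    ring
  · ring

theorem two_mul_vech_dotProduct_vech_conj_single {ι : Type*} [Fintype ι] [DecidableEq ι] {m : ℕ}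
    (G : Matrix ι (Fin m) ℝ) (s t : ι) :
    2 * (vech (Gᵀ * single s s (1 : ℝ) * G) ⬝ᵥ vech (Gᵀ * single t t (1 : ℝ) * G)) =
      ((G * Gᵀ) s t) ^ 2 := by
  have hsymm (u : ι) : (Gᵀ * single u u (1 : ℝ) * G).IsSymm :=
    IsSymm.ext fun i j => by simp only [transpose_mul_single_mul_apply, mul_comm]
  rw [two_mul_vech_dotProduct_vech (hsymm s) (hsymm t), sq, mul_apply, Finset.sum_mul_sum]
  simp only [transpose_mul_single_mul_apply, transpose_apply]
  exact Fintype.sum_congr _ _ fun i => Fintype.sum_congr _ _ fun j => by ring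

theorem statement6_general (T k : ℕ) (hkT : k < T)
    (d : Fin T → ℝ) (hd : ∀ t, 0 < d t)
    (F : Matrix (Fin T) (Fin k) ℝ) (hF : F.rank = k)
    (G : Matrix (Fin T) (Fin (T - k)) ℝ)
    (hFG : Fᵀ * (Matrix.diagonal d)⁻¹ * G = 0)
    (hGG : Gᵀ * (Matrix.diagonal d)⁻¹ * G = 1)
    (X : Matrix {q : Fin (T - k) × Fin (T - k) // q.1 ≤ q.2} (Fin T) ℝ)
    (hX : ∀ (t : Fin T) (q : {q : Fin (T - k) × Fin (T - k) // q.1 ≤ q.2}),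
      X q t = vech (Gᵀ * Matrix.single t t (1 : ℝ) * G) q)
    (M : Matrix (Fin T) (Fin T) ℝ)
    (hM : M = 1 - F * (Fᵀ * (Matrix.diagonal d)⁻¹ * F)⁻¹ * Fᵀ * (Matrix.diagonal d)⁻¹) :
    M = G * Gᵀ * (Matrix.diagonal d)⁻¹ ∧
      Matrix.hadamard M M =
        (2 : ℝ) • (Xᵀ * X * ((Matrix.diagonal d)⁻¹ * (Matrix.diagonal d)⁻¹)) := by
  have hdiag : (diagonal d)⁻¹ = diagonal d⁻¹ :=
    inv_eq_right_inv <| by simp [diagonal_mul_diagonal, (hd _).ne']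
  have hunit : IsUnit (Fᵀ * (diagonal d)⁻¹ * F) := by
    rw [hdiag]
    exact (posDef_transpose_mul_diagonal_mul (fun t => inv_pos.2 (hd t))
      (by rwa [Fintype.card_fin])).isUnit
  have hproj : M = G * Gᵀ * (diagonal d)⁻¹ :=
    hM ▸ one_sub_mul_inv_mul_eq_mul_transpose_mul
      ((finCongr (Nat.add_sub_cancel' hkT.le).symm).trans finSumFinEquiv.symm)
      (by rw [hdiag, diagonal_transpose]) hFG hGG hunit
  refine ⟨hproj, ?_⟩
  ext s t
  have hXtX : (Xᵀ * X) s t =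
      vech (Gᵀ * single s s (1 : ℝ) * G) ⬝ᵥ vech (Gᵀ * single t t (1 : ℝ) * G) := by
    simp only [mul_apply, transpose_apply, hX, dotProduct]
  rw [hproj, hdiag, diagonal_mul_diagonal, hadamard_apply, Matrix.smul_apply, mul_diagonal,
    mul_diagonal, hXtX, smul_eq_mul, ← mul_assoc 2, two_mul_vech_dotProduct_vech_conj_single]
  ring

theorem statement6 (T k : ℕ) (hk : 1 ≤ k) (hkT : k < T)
    (d : Fin T → ℝ) (hd : ∀ t, 0 < d t)
    (F : Matrix (Fin T) (Fin k) ℝ) (hF : F.rank = k)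
    (G : Matrix (Fin T) (Fin (T - k)) ℝ)
    (hFG : Fᵀ * (Matrix.diagonal d)⁻¹ * G = 0)
    (hGG : Gᵀ * (Matrix.diagonal d)⁻¹ * G = 1)
    (X : Matrix {q : Fin (T - k) × Fin (T - k) // q.1 ≤ q.2} (Fin T) ℝ)
    (hX : ∀ (t : Fin T) (q : {q : Fin (T - k) × Fin (T - k) // q.1 ≤ q.2}),
      X q t = vech (Gᵀ * Matrix.single t t (1 : ℝ) * G) q)
    (M : Matrix (Fin T) (Fin T) ℝ)
    (hM : M = 1 - F * (Fᵀ * (Matrix.diagonal d)⁻¹ * F)⁻¹ * Fᵀ * (Matrix.diagonal d)⁻¹) :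
    M = G * Gᵀ * (Matrix.diagonal d)⁻¹ ∧
      Matrix.hadamard M M =
        (2 : ℝ) • (Xᵀ * X * ((Matrix.diagonal d)⁻¹ * (Matrix.diagonal d)⁻¹)) :=
  statement6_general T k hkT d hd F hF G hFG hGG X hX M hM

end
end

section
/- Let T > k ≥ 1 be integers, let V be a T×T diagonal matrix with positive diagonal entries, let F be a T×k real matrix of full column rank, and let G be a T×(T−k) real matrix with F' V^{-1} G = 0 and G' V^{-1} G = I_{T−k}. Let X be the ((T−k)(T−k+1)/2)×T matrix whose t-th column is vech(G' E_{t,t} G), and set Φ := V − F (F' V^{-1} F)^{-1} F'. Then the following three conditions are equivalent: (a) the T×T matrix M_{F,V}^{⊙2} is invertible; (b) X has full column rank T (equivalently, X'X is invertible); (c) the T×T matrix Φ^{⊙2} is invertible. -/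
/-! The columns of `[F G]` form a `V⁻¹`-orthogonal basis, whence the decomposition
`V = F (F'V⁻¹F)⁻¹ F' + G G'`, i.e. `Φ = G G'`. Then `M = Φ V⁻¹`, so `M^{⊙2} = Φ^{⊙2} V^{-2}` and
(a) ⇔ (c). On symmetric matrices `vech` is an isometry for half the Frobenius inner product, so
`(X'X)_{st} = ½ ⟨G'E_{ss}G, G'E_{tt}G⟩ = ½ (Σ_i G_{si} G_{ti})² = ½ Φ_{st}²`, i.e. `X'X = ½ Φ^{⊙2}`,
which gives (b) ⇔ (c). -/

open Matrix

noncomputable section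

namespace Matrix

variable {m n ι κ ν K : Type*} [Field K]

theorem mulVec_injective_of_rank_eq_card_width [Fintype n] (A : Matrix m n K)
    (hA : A.rank = Fintype.card n) : Function.Injective A.mulVec := by
  have h := LinearMap.finrank_range_add_finrank_ker A.mulVecLin
  rw [← rank, hA, Module.finrank_fintype_fun_eq_card, add_eq_left,
    Submodule.finrank_eq_zero, LinearMap.ker_eq_bot] at h
  exact h

theorem isUnit_iff_rank_eq_card [Fintype n] [DecidableEq n] (A : Matrix n n K) :
    IsUnit A ↔ A.rank = Fintype.card n :=
  ⟨A.rank_of_isUnit, fun h => mulVec_injective_iff_isUnit.mp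
    (A.mulVec_injective_of_rank_eq_card_width h)⟩

theorem isUnit_transpose_mul_mul_of_posDef [Fintype m] [Fintype n] [DecidableEq n]
    {W : Matrix m m ℝ} (hW : W.PosDef) (F : Matrix m n ℝ) (hF : F.rank = Fintype.card n) :
    IsUnit (Fᵀ * W * F) := by
  simpa [conjTranspose_eq_transpose_of_trivial] using
    (hW.conjTranspose_mul_mul_same (F.mulVec_injective_of_rank_eq_card_width hF)).isUnit

theorem hadamard_mul_diagonal [Fintype n] [DecidableEq n] (A B : Matrix m n K) (v w : n → K) :
    (A * diagonal v) ⊙ (B * diagonal w) = (A ⊙ B) * diagonal (v * w) := by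
  ext i j
  simp only [hadamard_apply, mul_diagonal, Pi.mul_apply]
  ring

theorem mul_inv_mul_transpose_add_mul_transpose_eq [Fintype ι] [Fintype κ] [Fintype ν]
    [DecidableEq ι] [DecidableEq κ] [DecidableEq ν] (e : ι ≃ κ ⊕ ν) {V : Matrix ι ι K}
    (hV : IsUnit V) (hVsymm : V.IsSymm) (F : Matrix ι κ K) (G : Matrix ι ν K)
    (hF : IsUnit (Fᵀ * V⁻¹ * F)) (hFG : Fᵀ * V⁻¹ * G = 0) (hGG : Gᵀ * V⁻¹ * G = 1) :
    F * (Fᵀ * V⁻¹ * F)⁻¹ * Fᵀ + G * Gᵀ = V := by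
  set A := Fᵀ * V⁻¹ * F
  have hGF : Gᵀ * V⁻¹ * F = 0 := by
    simpa [Matrix.mul_assoc, transpose_nonsing_inv, hVsymm.eq] using congrArg transpose hFG
  have hBtB : (fromCols F G)ᵀ * V⁻¹ * fromCols F G = fromBlocks A 0 0 1 := by
    rw [transpose_fromCols, fromRows_mul, fromRows_mul_fromCols, hFG, hGF, hGG]
  have hB :
      fromBlocks A⁻¹ 0 0 (1 : Matrix ν ν K) * (fromCols F G)ᵀ * V⁻¹ * fromCols F G = 1 := by
    rw [Matrix.mul_assoc, Matrix.mul_assoc, ← Matrix.mul_assoc _ V⁻¹, hBtB, fromBlocks_multiply]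
    simp [nonsing_inv_mul _ ((isUnit_iff_isUnit_det A).mp hF)]
  -- `[F G]` has the left inverse `diag(A⁻¹, 1) [F G]ᵀ V⁻¹`; being square, it is also a right
  -- inverse.
  have hB' : (F * A⁻¹ * Fᵀ + G * Gᵀ) * V⁻¹ = 1 := by
    rw [← (mul_eq_one_comm_of_equiv e.symm).mp hB, ← Matrix.mul_assoc, ← Matrix.mul_assoc,
      fromCols_mul_fromBlocks, transpose_fromCols, fromCols_mul_fromRows]
    simp
  calc F * A⁻¹ * Fᵀ + G * Gᵀ = (F * A⁻¹ * Fᵀ + G * Gᵀ) * V⁻¹ * V := by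
        rw [Matrix.mul_assoc _ V⁻¹, nonsing_inv_mul _ ((isUnit_iff_isUnit_det V).mp hV),
          Matrix.mul_one]
    _ = V := by rw [hB', Matrix.one_mul]

theorem transpose_mul_single_mul_apply_s7 [Fintype m] [DecidableEq m] (G : Matrix m n K) (t : m)
    (i j : n) : (Gᵀ * single t t (1 : K) * G) i j = G t i * G t j := by
  simp [mul_apply, single_apply, ite_and]

end Matrix

theorem sum_le_pairs_two_nsmul_off_diag_eq_sum {ι M : Type*} [Fintype ι] [LinearOrder ι]
    [AddCommMonoid M] (f : ι × ι → M) (hf : ∀ i j, f (i, j) = f (j, i)) :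
    ∑ q : {q : ι × ι // q.1 ≤ q.2}, (if q.1.1 = q.1.2 then f q else 2 • f q) = ∑ p, f p := by
  have h_swap : ∑ p ∈ Finset.univ.filter (fun p : ι × ι => ¬ p.1 ≤ p.2), f p
      = ∑ p ∈ Finset.univ.filter (fun p : ι × ι => p.1 ≤ p.2), if p.1 = p.2 then 0 else f p := by
    rw [Finset.sum_ite, Finset.sum_const_zero, zero_add, Finset.filter_filter]
    refine Finset.sum_nbij' Prod.swap Prod.swap ?_ ?_ (by simp) (by simp) (fun p _ => hf _ _)
    · intro p; simp +contextual [le_of_lt, ne_of_lt]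
    · intro p; simp +contextual [lt_of_le_of_ne]
  rw [← Finset.sum_filter_add_sum_filter_not Finset.univ (fun p : ι × ι => p.1 ≤ p.2), h_swap,
    ← Finset.sum_add_distrib,
    ← Finset.sum_subtype (Finset.univ.filter fun p : ι × ι => p.1 ≤ p.2) (by simp) fun p =>
      if p.1 = p.2 then f p else 2 • f p]
  refine Finset.sum_congr rfl fun p _ => ?_
  split_ifs <;> simp [two_nsmul]

theorem transpose_mul_self_eq_inv_two_smul_hadamard {ι : Type*} [Fintype ι] [DecidableEq ι]
    {m : ℕ} (G : Matrix ι (Fin m) ℝ) (X : Matrix {q : Fin m × Fin m // q.1 ≤ q.2} ι ℝ)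
    (hX : ∀ t q, X q t = vech (Gᵀ * single t t (1 : ℝ) * G) q) :
    Xᵀ * X = (2 : ℝ)⁻¹ • ((G * Gᵀ) ⊙ (G * Gᵀ)) := by
  ext s t
  have hsymm (t : ι) : (Gᵀ * single t t (1 : ℝ) * G).IsSymm :=
    IsSymm.ext fun i j => by simp only [transpose_mul_single_mul_apply_s7, mul_comm]
  have hvech := two_mul_vech_dotProduct_vech (hsymm s) (hsymm t)
  simp only [transpose_mul_single_mul_apply_s7] at hvech
  have hXst : (Xᵀ * X) s t
      = vech (Gᵀ * single s s (1 : ℝ) * G) ⬝ᵥ vech (Gᵀ * single t t (1 : ℝ) * G) := by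
    simp [mul_apply, dotProduct, hX]
  have hsq : (∑ i, G s i * G t i) * (∑ j, G s j * G t j)
      = ∑ i, ∑ j, G s i * G s j * (G t i * G t j) := by
    rw [Finset.sum_mul_sum]
    exact Fintype.sum_congr _ _ fun i => Fintype.sum_congr _ _ fun j => by ring
  simp only [hXst, Matrix.smul_apply, hadamard_apply, mul_apply, transpose_apply, smul_eq_mul]
  linear_combination hvech / 2 - hsq / 2

theorem statement7_general (T k : ℕ)
    (d : Fin T → ℝ) (hd : ∀ t, 0 < d t)
    (F : Matrix (Fin T) (Fin k) ℝ) (hF : F.rank = k)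
    (G : Matrix (Fin T) (Fin (T - k)) ℝ)
    (hFG : Fᵀ * (Matrix.diagonal d)⁻¹ * G = 0)
    (hGG : Gᵀ * (Matrix.diagonal d)⁻¹ * G = 1)
    (X : Matrix {q : Fin (T - k) × Fin (T - k) // q.1 ≤ q.2} (Fin T) ℝ)
    (hX : ∀ (t : Fin T) (q : {q : Fin (T - k) × Fin (T - k) // q.1 ≤ q.2}),
      X q t = vech (Gᵀ * Matrix.single t t (1 : ℝ) * G) q)
    (M : Matrix (Fin T) (Fin T) ℝ)
    (hM : M = 1 - F * (Fᵀ * (Matrix.diagonal d)⁻¹ * F)⁻¹ * Fᵀ * (Matrix.diagonal d)⁻¹)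
    (Φ : Matrix (Fin T) (Fin T) ℝ)
    (hΦ : Φ = Matrix.diagonal d - F * (Fᵀ * (Matrix.diagonal d)⁻¹ * F)⁻¹ * Fᵀ) :
    (IsUnit (Matrix.hadamard M M) ↔ X.rank = T) ∧
      (X.rank = T ↔ IsUnit (Matrix.hadamard Φ Φ)) := by
  have hk_le : k ≤ T := hF ▸ F.rank_le_height
  have hV : (diagonal d).PosDef := posDef_diagonal_iff.mpr hd
  have hVinv : (diagonal d)⁻¹ = diagonal d⁻¹ :=
    inv_eq_right_inv (by simp [diagonal_mul_diagonal, mul_inv_cancel₀ (hd _).ne'])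
  have hΦG : Φ = G * Gᵀ := by
    rw [hΦ, sub_eq_iff_eq_add', mul_inv_mul_transpose_add_mul_transpose_eq
      ((finCongr (Nat.add_sub_cancel' hk_le).symm).trans finSumFinEquiv.symm) hV.isUnit
      (isSymm_diagonal d) F G (isUnit_transpose_mul_mul_of_posDef hV.inv F (by simpa using hF))
      hFG hGG]
  have hMΦ : M = Φ * diagonal d⁻¹ := by
    rw [hM, hΦ, ← hVinv, Matrix.sub_mul,
      mul_nonsing_inv _ ((isUnit_iff_isUnit_det _).mp hV.isUnit)]
  have hMM : IsUnit (M ⊙ M) ↔ IsUnit (Φ ⊙ Φ) := by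
    rw [hMΦ, hadamard_mul_diagonal]
    exact IsUnit.mul_right_iff <|
      isUnit_diagonal.mpr (Pi.isUnit_iff.mpr fun t => by simp [(hd t).ne'])
  have hXX : Xᵀ * X = (2 : ℝ)⁻¹ • (Φ ⊙ Φ) := by
    rw [hΦG]; exact transpose_mul_self_eq_inv_two_smul_hadamard G X hX
  have hrank : X.rank = T ↔ IsUnit (Φ ⊙ Φ) :=
    calc X.rank = T ↔ IsUnit (Xᵀ * X) := by
          rw [isUnit_iff_rank_eq_card, rank_transpose_mul_self, Fintype.card_fin]
      _ ↔ IsUnit (Φ ⊙ Φ) := by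
          rw [hXX, ← Units.smul_mk0 (inv_ne_zero two_ne_zero), isUnit_smul_iff]
  exact ⟨hMM.trans hrank.symm, hrank⟩

theorem statement7 (T k : ℕ) (hk : 1 ≤ k) (hkT : k < T)
    (d : Fin T → ℝ) (hd : ∀ t, 0 < d t)
    (F : Matrix (Fin T) (Fin k) ℝ) (hF : F.rank = k)
    (G : Matrix (Fin T) (Fin (T - k)) ℝ)
    (hFG : Fᵀ * (Matrix.diagonal d)⁻¹ * G = 0)
    (hGG : Gᵀ * (Matrix.diagonal d)⁻¹ * G = 1)
    (X : Matrix {q : Fin (T - k) × Fin (T - k) // q.1 ≤ q.2} (Fin T) ℝ)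
    (hX : ∀ (t : Fin T) (q : {q : Fin (T - k) × Fin (T - k) // q.1 ≤ q.2}),
      X q t = vech (Gᵀ * Matrix.single t t (1 : ℝ) * G) q)
    (M : Matrix (Fin T) (Fin T) ℝ)
    (hM : M = 1 - F * (Fᵀ * (Matrix.diagonal d)⁻¹ * F)⁻¹ * Fᵀ * (Matrix.diagonal d)⁻¹)
    (Φ : Matrix (Fin T) (Fin T) ℝ)
    (hΦ : Φ = Matrix.diagonal d - F * (Fᵀ * (Matrix.diagonal d)⁻¹ * F)⁻¹ * Fᵀ) :
    (IsUnit (Matrix.hadamard M M) ↔ X.rank = T) ∧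
      (X.rank = T ↔ IsUnit (Matrix.hadamard Φ Φ)) :=
  statement7_general T k d hd F hF G hFG hGG X hX M hM Φ hΦ
end
end

section
/- Let T ≥ 1 and let V be a T×T real symmetric positive-definite matrix. Consider the function 𝓛(A) := −(1/2) log det A − (1/2) tr(V A^{-1}) defined on the set of T×T real symmetric positive-definite matrices A. Then 𝓛 attains its unique global maximum at A = V: for every symmetric positive-definite A, 𝓛(A) ≤ 𝓛(V) = −(1/2) log det V − T/2, with equality if and only if A = V. -/
/-!
Whiten by `S = V^{1/2}`: the matrix `M = S A⁻¹ S` is positive definite, with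
`tr M = tr (V A⁻¹)` and `log det M = log det V - log det A`. In terms of the eigenvalues
`λᵢ > 0` of `M`, `tr M - log det M - T = ∑ᵢ (λᵢ - 1 - log λᵢ) ≥ 0`, with equality iff every
`λᵢ = 1`, i.e. `M = 1`, i.e. `A = V`.
-/

open Matrix

namespace Matrix

variable {n : Type*} [Fintype n] [DecidableEq n]

lemma IsHermitian.eq_one_of_eigenvalues_eq_one {𝕜 : Type*} [RCLike 𝕜] {M : Matrix n n 𝕜}
    (hM : M.IsHermitian) (h : ∀ i, hM.eigenvalues i = 1) : M = 1 := by
  rw [hM.spectral_theorem]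
  convert map_one (Unitary.conjStarAlgAut 𝕜 _ hM.eigenvectorUnitary)
  ext i j
  simp [diagonal, one_apply, h]

lemma PosDef.trace_sub_log_det_sub_card {M : Matrix n n ℝ} (hM : M.PosDef) :
    M.trace - Real.log M.det - Fintype.card n =
      ∑ i, (hM.1.eigenvalues i - 1 - Real.log (hM.1.eigenvalues i)) := by
  have hdet : M.det = ∏ i, hM.1.eigenvalues i := by simpa using hM.1.det_eq_prod_eigenvalues
  have htr : M.trace = ∑ i, hM.1.eigenvalues i := by simpa using hM.1.trace_eq_sum_eigenvalues
  rw [htr, hdet, Real.log_prod fun i _ ↦ (hM.eigenvalues_pos i).ne', Finset.sum_sub_distrib,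
    Finset.sum_sub_distrib]
  simp only [Finset.sum_const, Finset.card_univ, nsmul_eq_mul, mul_one]
  ring

lemma PosDef.log_det_add_card_le_trace {M : Matrix n n ℝ} (hM : M.PosDef) :
    Real.log M.det + Fintype.card n ≤ M.trace := by
  have hsum := hM.trace_sub_log_det_sub_card
  have hnonneg : 0 ≤ ∑ i, (hM.1.eigenvalues i - 1 - Real.log (hM.1.eigenvalues i)) :=
    Finset.sum_nonneg fun i _ ↦ by linarith [Real.log_le_sub_one_of_pos (hM.eigenvalues_pos i)]
  linarith

lemma PosDef.log_det_add_card_eq_trace_iff {M : Matrix n n ℝ} (hM : M.PosDef) :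
    Real.log M.det + Fintype.card n = M.trace ↔ M = 1 := by
  refine ⟨fun h ↦ hM.1.eq_one_of_eigenvalues_eq_one fun i ↦ ?_, ?_⟩
  · by_contra hi
    have hsum := hM.trace_sub_log_det_sub_card
    have hpos : 0 < ∑ i, (hM.1.eigenvalues i - 1 - Real.log (hM.1.eigenvalues i)) :=
      Finset.sum_pos' (fun i _ ↦ by linarith [Real.log_le_sub_one_of_pos (hM.eigenvalues_pos i)])
        ⟨i, Finset.mem_univ i, by linarith [Real.log_lt_sub_one_of_pos (hM.eigenvalues_pos i) hi]⟩
    linarith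
  · rintro rfl
    simp

lemma mul_inv_mul_eq_one_iff {R : Type*} [CommRing R] {A S : Matrix n n R} (hA : IsUnit A.det) :
    S * A⁻¹ * S = 1 ↔ A = S * S := by
  rw [Matrix.mul_assoc, mul_eq_one_comm, Matrix.mul_assoc]
  constructor
  · intro h
    rw [← mul_nonsing_inv_cancel_left A (S * S) hA, h, Matrix.mul_one]
  · rintro rfl
    exact nonsing_inv_mul _ hA

lemma det_mul_inv_mul {K : Type*} [Field K] (A S : Matrix n n K) :
    (S * A⁻¹ * S).det = (S * S).det / A.det := by
  rw [det_mul, det_mul, det_mul, det_nonsing_inv, Ring.inverse_eq_inv', div_eq_mul_inv]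
  ring

section Whitening

open scoped MatrixOrder

variable {A V : Matrix n n ℝ}

lemma PosDef.posDef_sqrt_mul_inv_mul_sqrt (hA : A.PosDef) (hV : V.PosDef) :
    (CFC.sqrt V * A⁻¹ * CFC.sqrt V).PosDef := by
  have hS : (CFC.sqrt V).PosDef := (hV.isStrictlyPositive.sqrt).posDef
  simpa only [hS.1.eq] using hA.inv.conjTranspose_mul_mul_same
    (mulVec_injective_iff_isUnit.mpr hS.isUnit)

lemma PosDef.log_det_sqrt_mul_inv_mul_sqrt (hA : A.PosDef) (hV : V.PosDef) :
    Real.log (CFC.sqrt V * A⁻¹ * CFC.sqrt V).det = Real.log V.det - Real.log A.det := by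
  rw [det_mul_inv_mul, CFC.sqrt_mul_sqrt_self V hV.posSemidef.nonneg,
    Real.log_div hV.det_pos.ne' hA.det_pos.ne']

lemma PosSemidef.trace_sqrt_mul_inv_mul_sqrt (hV : V.PosSemidef) :
    (CFC.sqrt V * A⁻¹ * CFC.sqrt V).trace = (V * A⁻¹).trace := by
  rw [trace_mul_cycle, CFC.sqrt_mul_sqrt_self V hV.nonneg]

theorem PosDef.log_det_sub_log_det_add_card_le_trace_mul_inv (hA : A.PosDef) (hV : V.PosDef) :
    Real.log V.det - Real.log A.det + Fintype.card n ≤ (V * A⁻¹).trace := by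
  rw [← hA.log_det_sqrt_mul_inv_mul_sqrt hV, ← hV.posSemidef.trace_sqrt_mul_inv_mul_sqrt]
  exact (hA.posDef_sqrt_mul_inv_mul_sqrt hV).log_det_add_card_le_trace

theorem PosDef.log_det_sub_log_det_add_card_eq_trace_mul_inv_iff (hA : A.PosDef)
    (hV : V.PosDef) :
    Real.log V.det - Real.log A.det + Fintype.card n = (V * A⁻¹).trace ↔ A = V := by
  rw [← hA.log_det_sqrt_mul_inv_mul_sqrt hV, ← hV.posSemidef.trace_sqrt_mul_inv_mul_sqrt,
    (hA.posDef_sqrt_mul_inv_mul_sqrt hV).log_det_add_card_eq_trace_iff,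
    mul_inv_mul_eq_one_iff hA.det_pos.ne'.isUnit, CFC.sqrt_mul_sqrt_self V hV.posSemidef.nonneg]

end Whitening

end Matrix

theorem statement8_general (T : ℕ)
    (V : Matrix (Fin T) (Fin T) ℝ) (hV : V.PosDef) :
    (-(1 / 2) * Real.log V.det - (1 / 2) * (V * V⁻¹).trace =
        -(1 / 2) * Real.log V.det - (T : ℝ) / 2) ∧
      ∀ A : Matrix (Fin T) (Fin T) ℝ, A.PosDef →
        (-(1 / 2) * Real.log A.det - (1 / 2) * (V * A⁻¹).trace ≤
            -(1 / 2) * Real.log V.det - (T : ℝ) / 2) ∧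
          (-(1 / 2) * Real.log A.det - (1 / 2) * (V * A⁻¹).trace =
              -(1 / 2) * Real.log V.det - (T : ℝ) / 2 ↔ A = V) := by
  refine ⟨?_, fun A hA ↦ ⟨?_, ?_⟩⟩
  · rw [mul_nonsing_inv V hV.det_pos.ne'.isUnit, trace_one, Fintype.card_fin]
    ring
  · have hle := hA.log_det_sub_log_det_add_card_le_trace_mul_inv hV
    rw [Fintype.card_fin] at hle
    linarith
  · rw [← hA.log_det_sub_log_det_add_card_eq_trace_mul_inv_iff hV, Fintype.card_fin]
    constructor <;> intro h <;> linarith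

theorem statement8 (T : ℕ) (hT : 1 ≤ T)
    (V : Matrix (Fin T) (Fin T) ℝ) (hV : V.PosDef) :
    (-(1 / 2) * Real.log V.det - (1 / 2) * (V * V⁻¹).trace =
        -(1 / 2) * Real.log V.det - (T : ℝ) / 2) ∧
      ∀ A : Matrix (Fin T) (Fin T) ℝ, A.PosDef →
        (-(1 / 2) * Real.log A.det - (1 / 2) * (V * A⁻¹).trace ≤
            -(1 / 2) * Real.log V.det - (T : ℝ) / 2) ∧
          (-(1 / 2) * Real.log A.det - (1 / 2) * (V * A⁻¹).trace =
              -(1 / 2) * Real.log V.det - (T : ℝ) / 2 ↔ A = V) :=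
  statement8_general T V hV
end

section
/- Let df ≥ 2 be an integer and let ρ_j ∈ [0,1] for j = 2, ..., df−1 (an empty family when df = 2). Define b_i := (1/2)(1 + Σ_{j=2}^{df−1} ρ_j^i) for integers i ≥ 1, and let (a_i)_{i≥1} be a real sequence with a_i ≥ max{(df−1)/2, 1} for all i ≥ 1. Define sequences (g_l)_{l≥1} and (c_l)_{l≥1} by g_1 = c_1 = 1, g_{l+1} = (1/l)(b_1 g_l + b_2 g_{l−1} + ... + b_l g_1), and c_{l+1} = (1/l)(a_1 c_l + a_2 c_{l−1} + ... + a_l c_1), for l ≥ 1. Then g_l > 0 for all l, and the sequence (c_l / g_l)_{l≥1} is nondecreasing: c_{l+1}/g_{l+1} ≥ c_l/g_l for all l ≥ 1. -/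
noncomputable section

lemma aux_sum_form (w x : ℕ → ℝ)
    (hx : ∀ l, 1 ≤ l → x (l + 1) = (1 / (l : ℝ)) * ∑ i ∈ Finset.Icc 1 l, w i * x (l + 1 - i)) :
    ∀ m : ℕ, 1 ≤ m → (m : ℝ) * x (m + 1) = ∑ i ∈ Finset.range m, w (i + 1) * x (m - i) := by
  intro m hm
  have hne : (m : ℝ) ≠ 0 := by positivity
  rw [hx m hm, one_div, ← mul_assoc, mul_inv_cancel₀ hne, one_mul,
    show Finset.Icc 1 m = Finset.Ico 1 (m+1) by rw [Finset.Ico_add_one_right_eq_Icc],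
    Finset.sum_Ico_eq_sum_range]
  apply Finset.sum_congr rfl
  intro i hi
  congr 2
  · omega
  · omega

lemma aux_pos (w x : ℕ → ℝ) (hw : ∀ i, 1 ≤ i → 0 < w i) (hx1 : x 1 = 1)
    (hx : ∀ l, 1 ≤ l → x (l + 1) = (1 / (l : ℝ)) * ∑ i ∈ Finset.Icc 1 l, w i * x (l + 1 - i)) :
    ∀ l, 1 ≤ l → 0 < x l := by
  intro l
  induction l using Nat.strong_induction_on with
  | _ l ih =>
    intro hl
    match l, hl with
    | 1, _ => rw [hx1]; norm_num
    | (k+2), _ =>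
      have hk : 1 ≤ k + 1 := Nat.le_add_left 1 k
      rw [show k + 2 = (k+1) + 1 from rfl, hx (k+1) hk]
      apply mul_pos (by positivity)
      apply Finset.sum_pos
      · intro i hi
        rw [Finset.mem_Icc] at hi
        exact mul_pos (hw i hi.1) (ih (k + 1 + 1 - i) (by omega) (by omega))
      · exact ⟨1, by simp⟩

lemma aux_upper (w x : ℕ → ℝ) (A : ℝ) (hpos : ∀ l, 1 ≤ l → 0 < x l)
    (hmono : ∀ i, 1 ≤ i → w (i + 1) ≤ w i) (hw1 : w 1 ≤ A) (hx1 : x 1 = 1)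
    (hx : ∀ l, 1 ≤ l → x (l + 1) = (1 / (l : ℝ)) * ∑ i ∈ Finset.Icc 1 l, w i * x (l + 1 - i)) :
    ∀ l : ℕ, 1 ≤ l → (l : ℝ) * x (l + 1) ≤ (A + l - 1) * x l := by
  have hs := aux_sum_form w x hx
  intro l hl
  match l, hl with
  | 1, _ =>
    rw [hs 1 le_rfl]
    simp [hx1]
    linarith
  | (k+1+1), _ =>
    have hk : 1 ≤ k + 1 := Nat.le_add_left 1 k
    rw [hs (k+2) (by omega), Finset.sum_range_succ']
    have hidx : ∀ i : ℕ, k + 2 - (i + 1) = k + 1 - i := fun i => by omega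
    simp only [hidx, Nat.sub_zero, Nat.zero_add]
    have h1 : ∑ i ∈ Finset.range (k+1), w (i + 1 + 1) * x (k + 1 - i)
        ≤ ∑ i ∈ Finset.range (k+1), w (i + 1) * x (k + 1 - i) := by
      apply Finset.sum_le_sum
      intro i hi
      rw [Finset.mem_range] at hi
      exact mul_le_mul_of_nonneg_right (hmono (i+1) (by omega))
        (hpos (k + 1 - i) (by omega)).le
    have h2 := (hs (k+1) hk).symm
    have hx2 := hpos (k+2) (by omega)
    have h3 : w 1 * x (k + 2) ≤ A * x (k + 2) :=
      mul_le_mul_of_nonneg_right hw1 hx2.le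
    push_cast at h2 ⊢
    linarith [h1, h2, h3]

lemma aux_lower (a x : ℕ → ℝ) (A : ℝ) (hA : 1 ≤ A) (ha : ∀ i, 1 ≤ i → A ≤ a i)
    (hpos : ∀ l, 1 ≤ l → 0 < x l) (hx1 : x 1 = 1)
    (hx : ∀ l, 1 ≤ l → x (l + 1) = (1 / (l : ℝ)) * ∑ i ∈ Finset.Icc 1 l, a i * x (l + 1 - i)) :
    ∀ l : ℕ, 1 ≤ l → (A + l - 1) * x l ≤ (l : ℝ) * x (l + 1) := by
  have hs := aux_sum_form a x hx
  intro l
  induction l using Nat.strong_induction_on with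
  | _ l ih =>
    intro hl
    match l, hl with
    | 1, _ =>
      rw [hs 1 le_rfl]
      simp [hx1]
      linarith [ha 1 le_rfl]
    | (k+1+1), _ =>
      have hk : 1 ≤ k + 1 := Nat.le_add_left 1 k
      have hmono : ∀ m : ℕ, 1 ≤ m → m ≤ k + 1 → x m ≤ x (m + 1) := by
        intro m hm1 hm2
        have h := ih m (by omega) hm1
        have hxm := hpos m hm1
        have hm' : (1:ℝ) ≤ (m:ℝ) := by exact_mod_cast hm1
        have hmpos : (0:ℝ) < m := by linarith
        have : (m:ℝ) * x m ≤ (m:ℝ) * x (m+1) := by nlinarith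
        exact le_of_mul_le_mul_left this hmpos
      rw [hs (k+2) (by omega), Finset.sum_range_succ]
      have hterm : ∀ i ∈ Finset.range (k+1),
          a (i+1) * x (k + 1 - i) + A * (x (k + 2 - i) - x (k + 1 - i))
            ≤ a (i+1) * x (k + 2 - i) := by
        intro i hi
        rw [Finset.mem_range] at hi
        have hd : x (k + 1 - i) ≤ x (k + 2 - i) := by
          rw [show k + 2 - i = (k + 1 - i) + 1 by omega]
          exact hmono (k + 1 - i) (by omega) (by omega)
        have := ha (i+1) (by omega)
        nlinarith
      have hsum1 := Finset.sum_le_sum hterm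
      rw [Finset.sum_add_distrib] at hsum1
      have hrec : ∑ i ∈ Finset.range (k+1), a (i + 1) * x (k + 1 - i)
          = ((k:ℝ)+1) * x (k + 1 + 1) := by
        have h := (hs (k+1) hk).symm
        push_cast at h
        exact h
      have htel : ∑ i ∈ Finset.range (k+1), A * (x (k + 2 - i) - x (k + 1 - i))
          = A * (x (k + 2) - x 1) := by
        rw [← Finset.mul_sum]
        congr 1
        have h := Finset.sum_range_sub' (fun i => x (k + 2 - i)) (k+1)
        simp only [Nat.sub_zero] at h
        have hc : ∀ i : ℕ, k + 2 - (i + 1) = k + 1 - i := fun i => by omega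
        simp only [hc] at h
        rw [h]
        congr 2
        omega
      rw [hrec, htel] at hsum1
      have h1x : x (k + 2 - (k + 1)) = 1 := by rw [show k + 2 - (k + 1) = 1 by omega, hx1]
      have haL := ha (k+2) (by omega)
      have hx2 := hpos (k+2) (by omega)
      rw [hx1] at hsum1
      simp only [show k + 1 + 1 = k + 2 from rfl] at hsum1 ⊢
      rw [h1x, mul_one]
      push_cast
      linarith [hsum1, haL]

theorem statement12 (df : ℕ) (hdf : 2 ≤ df)
    (ρ : ℕ → ℝ) (hρ : ∀ j, 2 ≤ j → j ≤ df - 1 → 0 ≤ ρ j ∧ ρ j ≤ 1)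
    (b : ℕ → ℝ)
    (hb : ∀ i, 1 ≤ i → b i = (1 / 2) * (1 + ∑ j ∈ Finset.Icc 2 (df - 1), ρ j ^ i))
    (a : ℕ → ℝ) (ha : ∀ i, 1 ≤ i → max (((df : ℝ) - 1) / 2) 1 ≤ a i)
    (g c : ℕ → ℝ) (hg1 : g 1 = 1) (hc1 : c 1 = 1)
    (hg : ∀ l, 1 ≤ l → g (l + 1) = (1 / (l : ℝ)) * ∑ i ∈ Finset.Icc 1 l, b i * g (l + 1 - i))
    (hc : ∀ l, 1 ≤ l → c (l + 1) = (1 / (l : ℝ)) * ∑ i ∈ Finset.Icc 1 l, a i * c (l + 1 - i)) :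
    (∀ l, 1 ≤ l → 0 < g l) ∧ ∀ l, 1 ≤ l → c l / g l ≤ c (l + 1) / g (l + 1) := by
  set A : ℝ := max (((df : ℝ) - 1) / 2) 1 with hA_def
  have hA : 1 ≤ A := le_max_right _ _
  -- facts about ρ
  have hρ' : ∀ j ∈ Finset.Icc 2 (df - 1), 0 ≤ ρ j ∧ ρ j ≤ 1 := by
    intro j hj
    rw [Finset.mem_Icc] at hj
    exact hρ j hj.1 hj.2
  -- b is positive
  have hb_pos : ∀ i, 1 ≤ i → 0 < b i := by
    intro i hi
    rw [hb i hi]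
    have hs : 0 ≤ ∑ j ∈ Finset.Icc 2 (df - 1), ρ j ^ i :=
      Finset.sum_nonneg fun j hj => pow_nonneg (hρ' j hj).1 i
    linarith
  -- b is nonincreasing
  have hb_mono : ∀ i, 1 ≤ i → b (i + 1) ≤ b i := by
    intro i hi
    rw [hb i hi, hb (i+1) (by omega)]
    have hs : ∑ j ∈ Finset.Icc 2 (df - 1), ρ j ^ (i+1)
        ≤ ∑ j ∈ Finset.Icc 2 (df - 1), ρ j ^ i := by
      apply Finset.sum_le_sum
      intro j hj
      exact pow_le_pow_of_le_one (hρ' j hj).1 (hρ' j hj).2 (by omega)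
    linarith
  -- b 1 ≤ A
  have hb1 : b 1 ≤ A := by
    rw [hb 1 le_rfl]
    have hcard : ((Finset.Icc 2 (df - 1)).card : ℝ) = (df : ℝ) - 2 := by
      rw [Nat.card_Icc, show df - 1 + 1 - 2 = df - 2 by omega]
      push_cast [Nat.cast_sub hdf]
      ring
    have hs := Finset.sum_le_card_nsmul (Finset.Icc 2 (df - 1)) (fun j => ρ j ^ 1) 1
      (fun j hj => by simpa using (hρ' j hj).2)
    rw [nsmul_eq_mul, hcard] at hs
    have h1 : ((df : ℝ) - 1) / 2 ≤ A := le_max_left _ _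
    have : (1 / 2 : ℝ) * (1 + ((df:ℝ) - 2)) = ((df : ℝ) - 1) / 2 := by ring
    nlinarith
  -- positivity of a
  have ha_pos : ∀ i, 1 ≤ i → 0 < a i := fun i hi => lt_of_lt_of_le (by linarith) (ha i hi)
  -- positivity of g and c
  have hgpos := aux_pos b g hb_pos hg1 hg
  have hcpos := aux_pos a c ha_pos hc1 hc
  refine ⟨hgpos, ?_⟩
  have hup := aux_upper b g A hgpos hb_mono hb1 hg1 hg
  have hlow := aux_lower a c A hA ha hcpos hc1 hc
  intro l hl
  have hgl := hgpos l hl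
  have hgl1 := hgpos (l+1) (by omega)
  have hcl := hcpos l hl
  have hcl1 := hcpos (l+1) (by omega)
  rw [div_le_div_iff₀ hgl hgl1]
  have hlpos : (0:ℝ) < l := by exact_mod_cast hl
  have h1 := hup l hl
  have h2 := hlow l hl
  have key : (l:ℝ) * (c l * g (l + 1)) ≤ (l:ℝ) * (c (l + 1) * g l) := by
    have e1 : c l * ((l:ℝ) * g (l+1)) ≤ c l * ((A + l - 1) * g l) :=
      mul_le_mul_of_nonneg_left h1 hcl.le
    have e2 : ((A + l - 1) * c l) * g l ≤ ((l:ℝ) * c (l+1)) * g l :=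
      mul_le_mul_of_nonneg_right h2 hgl.le
    nlinarith [e1, e2]
  exact le_of_mul_le_mul_left key hlpos
end
end

section
/- Let (a_i)_{i≥1} be a real sequence with a_i ≥ 1 for all i ≥ 1, and define the sequence (c_l)_{l≥1} by c_1 = 1 and c_{l+1} = (1/l)(a_1 c_l + a_2 c_{l−1} + ... + a_l c_1) for l ≥ 1. Then (c_l) is nondecreasing: c_{l+1} ≥ c_l for all l ≥ 1. -/
noncomputable section

-- telescoping sum over Icc 1 m
lemma tele_icc (c : ℕ → ℝ) : ∀ m : ℕ, ∑ j ∈ Finset.Icc 1 m, (c (j+1) - c j) = c (m+1) - c 1 := by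
  intro m
  induction m with
  | zero => simp
  | succ n ih =>
    rw [Finset.sum_Icc_succ_top (by omega : 1 ≤ n+1), ih]
    ring

-- reindexed telescoping
lemma tele_rev (c : ℕ → ℝ) (m : ℕ) :
    ∑ i ∈ Finset.Icc 1 m, (c (m+2-i) - c (m+1-i)) = c (m+1) - c 1 := by
  rw [← tele_icc c m]
  apply Finset.sum_nbij' (fun i => m + 1 - i) (fun j => m + 1 - j)
  · intro i hi; simp only [Finset.mem_Icc] at *; omega
  · intro j hj; simp only [Finset.mem_Icc] at *; omega
  · intro i hi; simp only [Finset.mem_Icc] at hi; omega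
  · intro j hj; simp only [Finset.mem_Icc] at hj; omega
  · intro i hi
    simp only [Finset.mem_Icc] at hi
    have e1 : m + 1 - i + 1 = m + 2 - i := by omega
    rw [e1]

theorem statement13 (a : ℕ → ℝ) (ha : ∀ i, 1 ≤ i → 1 ≤ a i)
    (c : ℕ → ℝ) (hc1 : c 1 = 1)
    (hc : ∀ l, 1 ≤ l → c (l + 1) = (1 / (l : ℝ)) * ∑ i ∈ Finset.Icc 1 l, a i * c (l + 1 - i)) :
    ∀ l, 1 ≤ l → c l ≤ c (l + 1) := by
  intro l
  induction l using Nat.strong_induction_on with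
  | _ l ih =>
    intro hl
    obtain ⟨m, rfl⟩ : ∃ m, l = m + 1 := ⟨l - 1, by omega⟩
    -- the big sum for c (m+2)
    have h1 : ((m:ℝ)+1) * c (m+2) = ∑ i ∈ Finset.Icc 1 (m+1), a i * c (m+2-i) := by
      have := hc (m+1) (by omega)
      have hne : ((m:ℝ)+1) ≠ 0 := by positivity
      push_cast at this
      rw [this]
      field_simp
    -- split off the top term
    have h3 : ∑ i ∈ Finset.Icc 1 (m+1), a i * c (m+2-i)
        = (∑ i ∈ Finset.Icc 1 m, a i * c (m+2-i)) + a (m+1) * c 1 := by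
      rw [Finset.sum_Icc_succ_top (by omega : 1 ≤ m+1)]
      have e : m + 2 - (m+1) = 1 := by omega
      rw [e]
    -- the sum for c (m+1)
    have h2 : ∑ i ∈ Finset.Icc 1 m, a i * c (m+1-i) = (m:ℝ) * c (m+1) := by
      rcases Nat.eq_zero_or_pos m with hm | hm
      · subst hm; simp
      · have := hc m hm
        have hne : (m:ℝ) ≠ 0 := by positivity
        rw [this]
        field_simp
    have T := tele_rev c m
    -- key identity
    have key : ((m:ℝ)+1) * (c (m+2) - c (m+1))
        = (∑ i ∈ Finset.Icc 1 m, (a i - 1) * (c (m+2-i) - c (m+1-i))) + (a (m+1) - 1) := by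
      have expand : ∑ i ∈ Finset.Icc 1 m, (a i - 1) * (c (m+2-i) - c (m+1-i))
          = (∑ i ∈ Finset.Icc 1 m, a i * c (m+2-i))
            - (∑ i ∈ Finset.Icc 1 m, a i * c (m+1-i))
            - (∑ i ∈ Finset.Icc 1 m, (c (m+2-i) - c (m+1-i))) := by
        rw [← Finset.sum_sub_distrib, ← Finset.sum_sub_distrib]
        apply Finset.sum_congr rfl
        intros; ring
      have hS : ∑ i ∈ Finset.Icc 1 m, a i * c (m+2-i)
          = ((m:ℝ)+1) * c (m+2) - a (m+1) * c 1 := by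
        rw [h1, h3]; ring
      rw [expand, hS, h2, T, hc1]
      ring
    -- nonnegativity of the RHS
    have hnonneg : 0 ≤ ((m:ℝ)+1) * (c (m+2) - c (m+1)) := by
      rw [key]
      apply add_nonneg
      · apply Finset.sum_nonneg
        intro i hi
        simp only [Finset.mem_Icc] at hi
        apply mul_nonneg
        · have := ha i hi.1; linarith
        · have hlt : m + 1 - i < m + 1 := by omega
          have h1i : 1 ≤ m + 1 - i := by omega
          have := ih (m + 1 - i) hlt h1i
          have e : m + 1 - i + 1 = m + 2 - i := by omega
          rw [e] at this
          linarith
      · have := ha (m+1) (by omega); linarith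
    have hpos : (0:ℝ) < (m:ℝ)+1 := by positivity
    nlinarith [hnonneg, hpos]
end
end

section
/- Let df ≥ 2 be an integer, let ρ_j ∈ [0,1] for j = 2, ..., df−1 (an empty family when df = 2), define b_i := (1/2)(1 + Σ_{j=2}^{df−1} ρ_j^i) for i ≥ 1, and define the sequence (g_l)_{l≥1} by g_1 = 1 and g_{l+1} = (1/l)(b_1 g_l + b_2 g_{l−1} + ... + b_l g_1) for l ≥ 1. Set ζ := max{(df−1)/2, 1}. Then for every integer i ≥ 1, g_{i+1} ≤ ((ζ + i − 1)/i) · g_i. -/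
noncomputable section

theorem statement14 (df : ℕ) (hdf : 2 ≤ df)
    (ρ : ℕ → ℝ) (hρ : ∀ j, 2 ≤ j → j ≤ df - 1 → 0 ≤ ρ j ∧ ρ j ≤ 1)
    (b : ℕ → ℝ)
    (hb : ∀ i, 1 ≤ i → b i = (1 / 2) * (1 + ∑ j ∈ Finset.Icc 2 (df - 1), ρ j ^ i))
    (g : ℕ → ℝ) (hg1 : g 1 = 1)
    (hg : ∀ l, 1 ≤ l → g (l + 1) = (1 / (l : ℝ)) * ∑ i ∈ Finset.Icc 1 l, b i * g (l + 1 - i)) :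
    ∀ i : ℕ, 1 ≤ i →
      g (i + 1) ≤ ((max (((df : ℝ) - 1) / 2) 1 + (i : ℝ) - 1) / (i : ℝ)) * g i := by
  have hbpos : ∀ i, 1 ≤ i → 0 ≤ b i := by
    intro i hi
    rw [hb i hi]
    apply mul_nonneg (by norm_num)
    have : 0 ≤ ∑ j ∈ Finset.Icc 2 (df - 1), ρ j ^ i := by
      apply Finset.sum_nonneg
      intro j hj
      simp only [Finset.mem_Icc] at hj
      exact pow_nonneg (hρ j hj.1 hj.2).1 i
    linarith
  have hbmono : ∀ i, 1 ≤ i → b (i + 1) ≤ b i := by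
    intro i hi
    rw [hb i hi, hb (i + 1) (by omega)]
    have hsum : ∑ j ∈ Finset.Icc 2 (df - 1), ρ j ^ (i + 1)
        ≤ ∑ j ∈ Finset.Icc 2 (df - 1), ρ j ^ i := by
      apply Finset.sum_le_sum
      intro j hj
      simp only [Finset.mem_Icc] at hj
      exact pow_le_pow_of_le_one (hρ j hj.1 hj.2).1 (hρ j hj.1 hj.2).2 (by omega)
    linarith
  have hgpos : ∀ l, 1 ≤ l → 0 ≤ g l := by
    intro l
    induction l using Nat.strong_induction_on with
    | _ l ih =>
      intro hl
      rcases Nat.lt_or_ge l 2 with h | h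
      · interval_cases l
        simp [hg1]
      · obtain ⟨m, rfl⟩ : ∃ m, l = m + 1 := ⟨l - 1, by omega⟩
        have hm : 1 ≤ m := by omega
        rw [hg m hm]
        apply mul_nonneg (by positivity)
        apply Finset.sum_nonneg
        intro k hk
        simp only [Finset.mem_Icc] at hk
        exact mul_nonneg (hbpos k hk.1) (ih (m + 1 - k) (by omega) (by omega))
  have hb1 : b 1 ≤ max (((df : ℝ) - 1) / 2) 1 := by
    rw [hb 1 le_rfl]
    have hsum : ∑ j ∈ Finset.Icc 2 (df - 1), ρ j ^ 1 ≤ (df : ℝ) - 2 := by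
      calc ∑ j ∈ Finset.Icc 2 (df - 1), ρ j ^ 1
          ≤ ∑ j ∈ Finset.Icc 2 (df - 1), 1 := by
            apply Finset.sum_le_sum
            intro j hj
            simp only [Finset.mem_Icc] at hj
            simpa using (hρ j hj.1 hj.2).2
        _ = ((df - 2 : ℕ) : ℝ) := by
            rw [Finset.sum_const, Nat.card_Icc, nsmul_eq_mul, mul_one]
            congr 1
        _ = (df : ℝ) - 2 := by
            rw [Nat.cast_sub (by omega)]
            norm_num
    have h2 : ((df : ℝ) - 1) / 2 ≤ max (((df : ℝ) - 1) / 2) 1 := le_max_left _ _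
    linarith
  intro i hi
  have hicast : (0 : ℝ) < (i : ℝ) := by exact_mod_cast Nat.pos_of_ne_zero (by omega)
  have hkey : ∑ k ∈ Finset.Icc 1 i, b k * g (i + 1 - k)
      = b 1 * g i + ∑ k ∈ Finset.Icc 1 (i - 1), b (k + 1) * g (i - k) := by
    have h1 : Finset.Icc 1 i = insert 1 (Finset.Icc 2 i) := by
      ext x
      simp only [Finset.mem_Icc, Finset.mem_insert]
      omega
    rw [h1, Finset.sum_insert (by simp)]
    congr 1
    have h2 : Finset.Icc 2 i = Finset.map (addRightEmbedding 1) (Finset.Icc 1 (i - 1)) := by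
      rw [Finset.map_add_right_Icc]
      congr 1
      omega
    rw [h2, Finset.sum_map]
    apply Finset.sum_congr rfl
    intro k hk
    have he : i + 1 - (k + 1) = i - k := by omega
    simp [addRightEmbedding_apply, he]
  have hprev : ∑ k ∈ Finset.Icc 1 (i - 1), b k * g (i - k) = ((i : ℝ) - 1) * g i := by
    rcases Nat.lt_or_ge i 2 with h | h
    · interval_cases i
      simp
    · obtain ⟨m, rfl⟩ : ∃ m, i = m + 1 := ⟨i - 1, by omega⟩
      have hm : 1 ≤ m := by omega
      have hmcast : ((m : ℝ)) ≠ 0 := by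
        have : (0 : ℝ) < (m : ℝ) := by exact_mod_cast Nat.pos_of_ne_zero (by omega)
        linarith
      have := hg m hm
      have hsimp : Finset.Icc 1 (m + 1 - 1) = Finset.Icc 1 m := by congr 1
      rw [hsimp]
      have : ∑ k ∈ Finset.Icc 1 m, b k * g (m + 1 - k) = (m : ℝ) * g (m + 1) := by
        rw [hg m hm]
        field_simp
      rw [this]
      push_cast
      ring
  -- shifted sum bound
  have hshift : ∑ k ∈ Finset.Icc 1 (i - 1), b (k + 1) * g (i - k)
      ≤ ∑ k ∈ Finset.Icc 1 (i - 1), b k * g (i - k) := by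
    apply Finset.sum_le_sum
    intro k hk
    simp only [Finset.mem_Icc] at hk
    have hg' : 0 ≤ g (i - k) := hgpos _ (by omega)
    exact mul_le_mul_of_nonneg_right (hbmono k hk.1) hg'
  have hgi : 0 ≤ g i := hgpos i hi
  rw [hg i hi, hkey]
  have hζ : (1 : ℝ) ≤ max (((df : ℝ) - 1) / 2) 1 := le_max_right _ _
  calc (1 / (i : ℝ)) * (b 1 * g i + ∑ k ∈ Finset.Icc 1 (i - 1), b (k + 1) * g (i - k))
      ≤ (1 / (i : ℝ)) * (b 1 * g i + ((i : ℝ) - 1) * g i) := by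
        apply mul_le_mul_of_nonneg_left _ (by positivity)
        rw [← hprev]
        linarith
    _ ≤ (1 / (i : ℝ)) * (max (((df : ℝ) - 1) / 2) 1 * g i + ((i : ℝ) - 1) * g i) := by
        apply mul_le_mul_of_nonneg_left _ (by positivity)
        have := mul_le_mul_of_nonneg_right hb1 hgi
        linarith
    _ = ((max (((df : ℝ) - 1) / 2) 1 + (i : ℝ) - 1) / (i : ℝ)) * g i := by
        field_simp
        ring
end
end

section
/- Let T > k ≥ 1 be integers, set m := T−k and p := m(m+1)/2. Let G be a T×m real matrix, let O be an m×m orthogonal matrix, and set G̃ := G O. Let X (respectively X̃) be the p×T matrix whose t-th column is vech(G' E_{t,t} G) (respectively vech(G̃' E_{t,t} G̃)), and let 𝓡(O) := (1/2) A_m' (O' ⊗ O') A_m, where A_m is the m²×p matrix with columns √2 (e_1 ⊗ e_1), ..., √2 (e_m ⊗ e_m), followed by e_i ⊗ e_j + e_j ⊗ e_i for i < j ranked lexicographically. Then: (i) X̃ = 𝓡(O) X; (ii) if X'X is invertible, then X̃'X̃ is invertible and I_p − X̃ (X̃'X̃)^{-1} X̃' = 𝓡(O) ( I_p − X (X'X)^{-1}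 X' ) 𝓡(O)^{-1}. -/
open Matrix

noncomputable section

/-- The m² × (m(m+1)/2) duplication-type matrix `A_m`, whose column at a diagonal pair
`(i, i)` is `√2 (e_i ⊗ e_i)` and whose column at a pair `(i, j)` with `i < j` is
`e_i ⊗ e_j + e_j ⊗ e_i`. -/
def Amat (m : ℕ) : Matrix (Fin m × Fin m) {q : Fin m × Fin m // q.1 ≤ q.2} ℝ :=
  fun r q =>
    if q.val.1 = q.val.2 then (if r = q.val then Real.sqrt 2 else 0)
    else (if r = q.val then 1 else 0) + (if r = (q.val.2, q.val.1) then 1 else 0)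

/-- `𝓡(O) = (1/2) A_m' (O' ⊗ O') A_m`. -/
def Rmat (m : ℕ) (O : Matrix (Fin m) (Fin m) ℝ) :
    Matrix {q : Fin m × Fin m // q.1 ≤ q.2} {q : Fin m × Fin m // q.1 ≤ q.2} ℝ :=
  (1 / 2 : ℝ) • ((Amat m)ᵀ * Matrix.kroneckerMap (· * ·) Oᵀ Oᵀ * Amat m)


/-! For symmetric `Z`, `A_m vech Z = vec Z` and `A_m' vec Z = 2 vech Z`, while
`(O' ⊗ O') vec Z = vec (O' Z O)`; hence `𝓡(O) vech Z = vech (O' Z O)`. Since every vector is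
the `vech` of a symmetric matrix, `O ↦ 𝓡(O)` reverses products, preserves `1` and commutes with
transposition, so `𝓡(O)` is orthogonal when `O` is. Part (i) is the identity applied to the
columns `G' E_{t,t} G`, and part (ii) holds for `X̃ = R X` with any orthogonal `R`: the Gram
matrix is unchanged and `R⁻¹ = R'`. -/

open Kronecker

lemma Matrix.isSymm_single {n α : Type*} [DecidableEq n] [Zero α] (i : n) (a : α) :
    (single i i a).IsSymm := by
  simp [IsSymm]

lemma Matrix.IsSymm.transpose_mul_mul {n l α : Type*} [Fintype n] [CommSemiring α]
    {Z : Matrix n n α} (hZ : Z.IsSymm) (M : Matrix n l α) : (Mᵀ * Z * M).IsSymm := by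
  simp [IsSymm, transpose_mul, hZ.eq, Matrix.mul_assoc]

section Orthogonal

variable {n p α : Type*} [Fintype n] [DecidableEq n] [CommRing α] {R : Matrix n n α}

lemma transpose_mul_self_orthogonal_mul (hR : Rᵀ * R = 1) (X : Matrix n p α) :
    (R * X)ᵀ * (R * X) = Xᵀ * X := by
  rw [transpose_mul, Matrix.mul_assoc, ← Matrix.mul_assoc Rᵀ, hR, Matrix.one_mul]

lemma one_sub_hat_orthogonal_mul [Fintype p] [DecidableEq p] (hR : Rᵀ * R = 1)
    (X : Matrix n p α) :
    1 - (R * X) * ((R * X)ᵀ * (R * X))⁻¹ * (R * X)ᵀ =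
      R * (1 - X * (Xᵀ * X)⁻¹ * Xᵀ) * R⁻¹ := by
  rw [transpose_mul_self_orthogonal_mul hR, inv_eq_left_inv hR, transpose_mul,
    Matrix.mul_sub, Matrix.sub_mul, Matrix.mul_one, mul_eq_one_comm.mp hR]
  simp only [Matrix.mul_assoc]

end Orthogonal

variable {m : ℕ}

def sortPair (r : Fin m × Fin m) : {q : Fin m × Fin m // q.1 ≤ q.2} :=
  ⟨(min r.1 r.2, max r.1 r.2), min_le_max⟩

lemma sortPair_swap (r : Fin m × Fin m) : sortPair r.swap = sortPair r := by
  simp [sortPair, min_comm, max_comm]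

lemma sortPair_val (q : {q : Fin m × Fin m // q.1 ≤ q.2}) : sortPair q.val = q := by
  simp [sortPair, min_eq_left q.2, max_eq_right q.2]

lemma eq_sortPair_of_eq_or_eq_swap {q : {q : Fin m × Fin m // q.1 ≤ q.2}} {r : Fin m × Fin m}
    (h : r = q.val ∨ r = q.val.swap) : q = sortPair r := by
  rcases h with rfl | rfl
  · exact (sortPair_val q).symm
  · rw [sortPair_swap, sortPair_val]

lemma Amat_apply_of_ne_sortPair {r : Fin m × Fin m} {q : {q : Fin m × Fin m // q.1 ≤ q.2}}
    (h : q ≠ sortPair r) : Amat m r q = 0 := by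
  have hr : r ≠ q.val := fun e => h (eq_sortPair_of_eq_or_eq_swap (.inl e))
  have hr' : r ≠ (q.val.2, q.val.1) := fun e => h (eq_sortPair_of_eq_or_eq_swap (.inr e))
  simp [Amat, hr, hr']

lemma Amat_mul_vech_sortPair {Z : Matrix (Fin m) (Fin m) ℝ} (hZ : Z.IsSymm) (r : Fin m × Fin m) :
    Amat m r (sortPair r) * vech Z (sortPair r) = Z r.1 r.2 := by
  obtain ⟨a, b⟩ := r
  rcases lt_trichotomy a b with h | rfl | h
  · simp [Amat, vech, sortPair, h.le, h.ne]
  · simp [Amat, vech, sortPair, mul_div_cancel₀]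
  · simp [Amat, vech, sortPair, h.le, h.ne, h.ne', hZ.apply]

lemma Amat_mulVec_vech {Z : Matrix (Fin m) (Fin m) ℝ} (hZ : Z.IsSymm) :
    Amat m *ᵥ vech Z = vec Z := by
  funext r
  rw [mulVec, dotProduct, Finset.sum_eq_single (sortPair r)
    (fun q _ hq => by rw [Amat_apply_of_ne_sortPair hq, zero_mul]) (by simp),
    Amat_mul_vech_sortPair hZ, vec, hZ.apply]

lemma transpose_Amat_mulVec_vec {Z : Matrix (Fin m) (Fin m) ℝ} (hZ : Z.IsSymm) :
    (Amat m)ᵀ *ᵥ vec Z = (2 : ℝ) • vech Z := by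
  funext ⟨⟨i, j⟩, hij⟩
  simp only [mulVec, dotProduct, transpose_apply, Amat, vech, Pi.smul_apply]
  split_ifs with h
  · subst h
    simp only [vec, ite_mul, zero_mul, Finset.sum_ite_eq', Finset.mem_univ, ↓reduceIte,
      smul_eq_mul]
    field_simp
    rw [Real.sq_sqrt zero_le_two, mul_comm]
  · simp only [add_mul, ite_mul, one_mul, zero_mul]
    rw [Finset.sum_add_distrib, Finset.sum_ite_eq', Finset.sum_ite_eq']
    simp only [Finset.mem_univ, ↓reduceIte, vec, hZ.apply, smul_eq_mul]
    ring

lemma Rmat_mulVec_vech (M : Matrix (Fin m) (Fin m) ℝ) {Z : Matrix (Fin m) (Fin m) ℝ}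
    (hZ : Z.IsSymm) : Rmat m M *ᵥ vech Z = vech (Mᵀ * Z * M) := by
  have hvec : (Mᵀ ⊗ₖ Mᵀ) *ᵥ vec Z = vec (Mᵀ * Z * M) := by
    rw [kronecker_mulVec_vec, transpose_transpose]
  rw [Rmat, smul_mulVec, ← mulVec_mulVec, ← mulVec_mulVec, Amat_mulVec_vech hZ, hvec,
    transpose_Amat_mulVec_vec (hZ.transpose_mul_mul M), smul_smul]
  norm_num

lemma exists_isSymm_vech_eq (v : {q : Fin m × Fin m // q.1 ≤ q.2} → ℝ) :
    ∃ Z : Matrix (Fin m) (Fin m) ℝ, Z.IsSymm ∧ vech Z = v := by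
  refine ⟨of fun a b => (if a = b then √2 else 1) * v (sortPair (a, b)), ?_, ?_⟩
  · refine IsSymm.ext fun a b => ?_
    simp only [of_apply, eq_comm (a := b)]
    rw [← sortPair_swap (a, b)]
    rfl
  · funext ⟨⟨a, b⟩, hab⟩
    have hq := sortPair_val ⟨(a, b), hab⟩
    by_cases h : a = b
    · subst h
      simp_all [vech, mul_div_cancel_left₀]
    · simp [vech, h, hq]

lemma ext_of_mulVec_vech {M N : Matrix {q : Fin m × Fin m // q.1 ≤ q.2}
    {q : Fin m × Fin m // q.1 ≤ q.2} ℝ}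
    (h : ∀ Z : Matrix (Fin m) (Fin m) ℝ, Z.IsSymm → M *ᵥ vech Z = N *ᵥ vech Z) :
    M = N := by
  refine ext_of_mulVec_single fun q => ?_
  obtain ⟨Z, hZ, hv⟩ := exists_isSymm_vech_eq (Pi.single q (1 : ℝ))
  rw [← hv, h Z hZ]

lemma Rmat_mul (M N : Matrix (Fin m) (Fin m) ℝ) : Rmat m M * Rmat m N = Rmat m (N * M) :=
  ext_of_mulVec_vech fun Z hZ => by
    rw [← mulVec_mulVec, Rmat_mulVec_vech N hZ, Rmat_mulVec_vech M (hZ.transpose_mul_mul N),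
      Rmat_mulVec_vech _ hZ, transpose_mul]
    simp only [Matrix.mul_assoc]

lemma Rmat_one : Rmat m 1 = 1 :=
  ext_of_mulVec_vech fun Z hZ => by simp [Rmat_mulVec_vech _ hZ]

lemma transpose_Rmat (M : Matrix (Fin m) (Fin m) ℝ) : (Rmat m M)ᵀ = Rmat m Mᵀ := by
  simp [Rmat, transpose_mul, kroneckerMap_transpose, Matrix.mul_assoc]

lemma transpose_Rmat_mul_self {O : Matrix (Fin m) (Fin m) ℝ} (hO : Oᵀ * O = 1) :
    (Rmat m O)ᵀ * Rmat m O = 1 := by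
  rw [transpose_Rmat, Rmat_mul, mul_eq_one_comm.mp hO, Rmat_one]

theorem statement19_general (T k : ℕ)
    (G : Matrix (Fin T) (Fin (T - k)) ℝ)
    (O : Matrix (Fin (T - k)) (Fin (T - k)) ℝ) (hO : Oᵀ * O = 1)
    (X Xt : Matrix {q : Fin (T - k) × Fin (T - k) // q.1 ≤ q.2} (Fin T) ℝ)
    (hX : ∀ (t : Fin T) (q : {q : Fin (T - k) × Fin (T - k) // q.1 ≤ q.2}),
      X q t = vech (Gᵀ * Matrix.single t t (1 : ℝ) * G) q)
    (hXt : ∀ (t : Fin T) (q : {q : Fin (T - k) × Fin (T - k) // q.1 ≤ q.2}),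
      Xt q t = vech ((G * O)ᵀ * Matrix.single t t (1 : ℝ) * (G * O)) q) :
    Xt = Rmat (T - k) O * X ∧
      (IsUnit (Xᵀ * X) →
        IsUnit (Xtᵀ * Xt) ∧
          1 - Xt * (Xtᵀ * Xt)⁻¹ * Xtᵀ =
            Rmat (T - k) O * (1 - X * (Xᵀ * X)⁻¹ * Xᵀ) * (Rmat (T - k) O)⁻¹) := by
  have hXt_eq : Xt = Rmat (T - k) O * X := by
    ext q t
    have hcol : (fun q => X q t) = vech (Gᵀ * single t t (1 : ℝ) * G) := funext (hX t)
    have hconj : (G * O)ᵀ * single t t (1 : ℝ) * (G * O) =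
        Oᵀ * (Gᵀ * single t t (1 : ℝ) * G) * O := by
      simp only [transpose_mul, Matrix.mul_assoc]
    rw [hXt, hconj, ← Rmat_mulVec_vech O ((isSymm_single t 1).transpose_mul_mul G), ← hcol]
    rfl
  have hR := transpose_Rmat_mul_self hO
  subst hXt_eq
  exact ⟨rfl, fun hU => ⟨(transpose_mul_self_orthogonal_mul hR X).symm ▸ hU,
    one_sub_hat_orthogonal_mul hR X⟩⟩

theorem statement19 (T k : ℕ) (hk : 1 ≤ k) (hkT : k < T)
    (G : Matrix (Fin T) (Fin (T - k)) ℝ)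
    (O : Matrix (Fin (T - k)) (Fin (T - k)) ℝ) (hO : Oᵀ * O = 1)
    (X Xt : Matrix {q : Fin (T - k) × Fin (T - k) // q.1 ≤ q.2} (Fin T) ℝ)
    (hX : ∀ (t : Fin T) (q : {q : Fin (T - k) × Fin (T - k) // q.1 ≤ q.2}),
      X q t = vech (Gᵀ * Matrix.single t t (1 : ℝ) * G) q)
    (hXt : ∀ (t : Fin T) (q : {q : Fin (T - k) × Fin (T - k) // q.1 ≤ q.2}),
      Xt q t = vech ((G * O)ᵀ * Matrix.single t t (1 : ℝ) * (G * O)) q) :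
    Xt = Rmat (T - k) O * X ∧
      (IsUnit (Xᵀ * X) →
        IsUnit (Xtᵀ * Xt) ∧
          1 - Xt * (Xtᵀ * Xt)⁻¹ * Xtᵀ =
            Rmat (T - k) O * (1 - X * (Xᵀ * X)⁻¹ * Xᵀ) * (Rmat (T - k) O)⁻¹) :=
  statement19_general T k G O hO X Xt hX hXt
end
end
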